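/- arXiv:2308.06254 — 2 statements merged into one kernel-verified Lean document; each statement's English description precedes it below -/
import Mathlib

section
/- Let (x*, y*) be a feasible solution of the PCTSP LP relaxation and let v ∈ V∖{r}. Then there exists a feasible solution (x, y) of the PCTSP LP relaxation such that y_v = 0, y_u = y*_u for all u ∈ V∖{v}, and Σ_{e∈E} c_e x_e ≤ Σ_{e∈E} c_e x*_e (where c is the metric edge cost function). -/
open scoped NNReal
set_option linter.unusedSectionVars false
set_option maxHeartbeats 1600000


/-- The edge set of the complete graph on `V`: all 2-element subsets of `V`. -/
def completeEdges (V : Type*) [Fintype V] [DecidableEq V] : Finset (Finset V) :=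
  Finset.univ.powersetCard 2

/-- The cut `δ(S)`: edges of the complete graph with exactly one endpoint in `S`. -/
def cutEdges (V : Type*) [Fintype V] [DecidableEq V] (S : Finset V) : Finset (Finset V) :=
  (completeEdges V).filter (fun e => (e ∩ S).card = 1)

/-- Feasibility for the PCTSP LP relaxation. -/
def IsFeasibleLP {V : Type*} [Fintype V] [DecidableEq V]
    (r : V) (x : Finset V → ℝ) (y : V → ℝ) : Prop :=
  (∀ e ∈ completeEdges V, 0 ≤ x e) ∧ (∀ v : V, 0 ≤ y v) ∧ y r = 1 ∧
  (∀ v : V, v ≠ r → ∑ e ∈ cutEdges V {v}, x e = 2 * y v) ∧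
  (∑ e ∈ cutEdges V {r}, x e ≤ 2) ∧
  (∀ S : Finset V, r ∉ S → ∀ v ∈ S, 2 * y v ≤ ∑ e ∈ cutEdges V S, x e)


namespace PCTSP
open Finset
variable {V : Type*} [Fintype V] [DecidableEq V]

lemma mem_completeEdges {e : Finset V} : e ∈ completeEdges V ↔ e.card = 2 :=
  Finset.mem_powersetCard_univ

lemma pair_mem_completeEdges {p q : V} (h : p ≠ q) : ({p, q} : Finset V) ∈ completeEdges V := by
  rw [mem_completeEdges, Finset.card_pair h]

lemma cutEdges_subset (S : Finset V) : cutEdges V S ⊆ completeEdges V :=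
  Finset.filter_subset _ _

lemma pair_inter_card {p q : V} (h : p ≠ q) (S : Finset V) :
    (({p, q} : Finset V) ∩ S).card = (if p ∈ S then 1 else 0) + (if q ∈ S then 1 else 0) := by
  rw [← Finset.filter_mem_eq_inter, Finset.card_filter, Finset.sum_pair h]

lemma pair_mem_cutEdges_iff {p q : V} (h : p ≠ q) {S : Finset V} :
    ({p, q} : Finset V) ∈ cutEdges V S ↔ ((p ∈ S) ↔ (q ∉ S)) := by
  unfold cutEdges
  rw [Finset.mem_filter, pair_inter_card h]
  by_cases hp : p ∈ S <;> by_cases hq : q ∈ S <;>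
    simp [hp, hq, pair_mem_completeEdges h]

/-- weighted pair sum -/
def xpair (f : Finset V → ℝ) (P Q : Finset V) : ℝ := ∑ p ∈ P, ∑ q ∈ Q, f {p, q}

lemma xpair_comm (f : Finset V → ℝ) (P Q : Finset V) : xpair f P Q = xpair f Q P := by
  unfold xpair
  rw [Finset.sum_comm]
  exact Finset.sum_congr rfl fun q _ => Finset.sum_congr rfl fun p _ => by rw [Finset.pair_comm]

lemma xpair_union_left (f : Finset V → ℝ) {P P' : Finset V} (h : Disjoint P P') (Q : Finset V) :
    xpair f (P ∪ P') Q = xpair f P Q + xpair f P' Q :=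
  Finset.sum_union h

lemma xpair_union_right (f : Finset V → ℝ) (P : Finset V) {Q Q' : Finset V} (h : Disjoint Q Q') :
    xpair f P (Q ∪ Q') = xpair f P Q + xpair f P Q' := by
  unfold xpair
  rw [← Finset.sum_add_distrib]
  exact Finset.sum_congr rfl fun p _ => Finset.sum_union h

lemma xpair_nonneg {x : Finset V → ℝ} (hx : ∀ e ∈ completeEdges V, 0 ≤ x e)
    {P Q : Finset V} (h : Disjoint P Q) : 0 ≤ xpair x P Q := by
  refine Finset.sum_nonneg fun p hp => Finset.sum_nonneg fun q hq => ?_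
  exact hx _ (pair_mem_completeEdges (fun hpq => Finset.disjoint_left.mp h hp (hpq ▸ hq)))

lemma single_le_xpair {x : Finset V → ℝ} (hx : ∀ e ∈ completeEdges V, 0 ≤ x e)
    {P Q : Finset V} (h : Disjoint P Q) {p q : V} (hp : p ∈ P) (hq : q ∈ Q) :
    x {p, q} ≤ xpair x P Q := by
  have hne : ∀ p' ∈ P, ∀ q' ∈ Q, 0 ≤ x {p', q'} := fun p' hp' q' hq' =>
    hx _ (pair_mem_completeEdges (fun hpq => Finset.disjoint_left.mp h hp' (hpq ▸ hq')))
  calc x {p, q} ≤ ∑ q' ∈ Q, x {p, q'} :=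
        Finset.single_le_sum (fun q' hq' => hne p hp q' hq') hq
    _ ≤ xpair x P Q :=
        Finset.single_le_sum (f := fun p' => ∑ q' ∈ Q, x {p', q'})
          (fun p' hp' => Finset.sum_nonneg fun q' hq' => hne p' hp' q' hq') hp

/-- the bridge: a cut sum is a pair sum over `S ×ˢ Sᶜ`. -/
lemma cutSum_eq_xpair (f : Finset V → ℝ) (S : Finset V) :
    ∑ e ∈ cutEdges V S, f e = xpair f S Sᶜ := by
  unfold xpair
  rw [← Finset.sum_product']
  refine (Finset.sum_bij (fun pq _ => ({pq.1, pq.2} : Finset V)) ?_ ?_ ?_ ?_).symm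
  · rintro ⟨p, q⟩ hpq
    simp only [Finset.mem_product, Finset.mem_compl] at hpq
    have hne : p ≠ q := fun h => hpq.2 (h ▸ hpq.1)
    exact (pair_mem_cutEdges_iff hne).mpr (by tauto)
  · rintro ⟨p, q⟩ hpq ⟨p', q'⟩ hpq' heq
    simp only [Finset.mem_product, Finset.mem_compl] at hpq hpq'
    have heq' : ({p, q} : Finset V) = {p', q'} := heq
    have h1 : p' ∈ ({p, q} : Finset V) := heq' ▸ Finset.mem_insert_self _ _
    have h2 : q' ∈ ({p, q} : Finset V) := heq' ▸ (Finset.mem_insert_of_mem (Finset.mem_singleton_self _))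
    simp only [Finset.mem_insert, Finset.mem_singleton] at h1 h2
    have hp' : p' = p := by rcases h1 with h | h; exact h; exact absurd (h ▸ hpq'.1) hpq.2
    have hq' : q' = q := by rcases h2 with h | h; exact absurd (h ▸ hpq.1) hpq'.2; exact h
    simp [hp', hq']
  · intro e he
    unfold cutEdges at he
    rw [Finset.mem_filter] at he
    obtain ⟨a, b, hab, rfl⟩ := Finset.card_eq_two.mp (mem_completeEdges.mp he.1)
    have hcard := he.2
    rw [pair_inter_card hab] at hcard
    by_cases ha : a ∈ S <;> by_cases hb : b ∈ S
    · simp [ha, hb] at hcard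
    · exact ⟨(a, b), by simp [ha, hb], rfl⟩
    · exact ⟨(b, a), by simp [ha, hb], (Finset.pair_comm a b).symm⟩
    · simp [ha, hb] at hcard
  · intros; rfl

lemma xpair_union_union (f : Finset V → ℝ) {P P' Q Q' : Finset V} (hP : Disjoint P P')
    (hQ : Disjoint Q Q') : xpair f (P ∪ P') (Q ∪ Q') =
      xpair f P Q + xpair f P Q' + xpair f P' Q + xpair f P' Q' := by
  rw [xpair_union_left f hP, xpair_union_right f P hQ, xpair_union_right f P' hQ]; ring

lemma cutSum_compl (f : Finset V → ℝ) (S : Finset V) :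
    ∑ e ∈ cutEdges V Sᶜ, f e = ∑ e ∈ cutEdges V S, f e := by
  rw [cutSum_eq_xpair, cutSum_eq_xpair, compl_compl, xpair_comm]

lemma cutSum_empty (f : Finset V → ℝ) : ∑ e ∈ cutEdges V (∅ : Finset V), f e = 0 := by
  rw [cutSum_eq_xpair]; unfold xpair; simp

section identities
variable (f : Finset V → ℝ) (S T : Finset V)

lemma cut_identity1 :
    (∑ e ∈ cutEdges V S, f e) + ∑ e ∈ cutEdges V T, f e =
      (∑ e ∈ cutEdges V (S ∪ T), f e) + (∑ e ∈ cutEdges V (S ∩ T), f e)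
        + 2 * xpair f (S \ T) (T \ S) := by
  have hS : S = (S \ T) ∪ (S ∩ T) := by ext u; simp; tauto
  have hSc : Sᶜ = (T \ S) ∪ (S ∪ T)ᶜ := by ext u; simp; tauto
  have hT : T = (S ∩ T) ∪ (T \ S) := by ext u; simp; tauto
  have hTc : Tᶜ = (S \ T) ∪ (S ∪ T)ᶜ := by ext u; simp; tauto
  have hU : S ∪ T = (S \ T) ∪ ((S ∩ T) ∪ (T \ S)) := by ext u; simp; tauto
  have hIc : (S ∩ T)ᶜ = (S \ T) ∪ ((T \ S) ∪ (S ∪ T)ᶜ) := by ext u; simp; tauto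
  have d1 : Disjoint (S \ T) (S ∩ T) := by rw [Finset.disjoint_left]; intro a h1 h2; simp at h1 h2; tauto
  have d2 : Disjoint (T \ S) ((S ∪ T)ᶜ) := by rw [Finset.disjoint_left]; intro a h1 h2; simp at h1 h2; tauto
  have d3 : Disjoint (S ∩ T) (T \ S) := by rw [Finset.disjoint_left]; intro a h1 h2; simp at h1 h2; tauto
  have d4 : Disjoint (S \ T) ((S ∪ T)ᶜ) := by rw [Finset.disjoint_left]; intro a h1 h2; simp at h1 h2; tauto
  have d5 : Disjoint (S \ T) ((S ∩ T) ∪ (T \ S)) := by rw [Finset.disjoint_left]; intro a h1 h2; simp at h1 h2; tauto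
  have d6 : Disjoint (T \ S) (S ∪ T)ᶜ := d2
  have d7 : Disjoint (S \ T) ((T \ S) ∪ (S ∪ T)ᶜ) := by rw [Finset.disjoint_left]; intro a h1 h2; simp at h1 h2; tauto
  have eS : ∑ e ∈ cutEdges V S, f e = xpair f (S \ T) (T \ S) + xpair f (S \ T) (S ∪ T)ᶜ
      + xpair f (S ∩ T) (T \ S) + xpair f (S ∩ T) (S ∪ T)ᶜ := by
    rw [cutSum_eq_xpair]; nth_rewrite 1 [hS]; nth_rewrite 1 [hSc]
    exact xpair_union_union f d1 d2
  have eT : ∑ e ∈ cutEdges V T, f e = xpair f (S ∩ T) (S \ T) + xpair f (S ∩ T) (S ∪ T)ᶜ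
      + xpair f (T \ S) (S \ T) + xpair f (T \ S) (S ∪ T)ᶜ := by
    rw [cutSum_eq_xpair]; nth_rewrite 1 [hT]; nth_rewrite 1 [hTc]
    exact xpair_union_union f d3 d4
  have eU : ∑ e ∈ cutEdges V (S ∪ T), f e = xpair f (S \ T) (S ∪ T)ᶜ
      + xpair f (S ∩ T) (S ∪ T)ᶜ + xpair f (T \ S) (S ∪ T)ᶜ := by
    rw [cutSum_eq_xpair]; nth_rewrite 1 [hU]
    rw [xpair_union_left f d5, xpair_union_left f d3]; ring
  have eI : ∑ e ∈ cutEdges V (S ∩ T), f e = xpair f (S ∩ T) (S \ T)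
      + xpair f (S ∩ T) (T \ S) + xpair f (S ∩ T) (S ∪ T)ᶜ := by
    rw [cutSum_eq_xpair]; nth_rewrite 1 [hIc]
    rw [xpair_union_right f _ d7, xpair_union_right f _ d2]; ring
  have c1 := xpair_comm f (S ∩ T) (S \ T)
  have c2 := xpair_comm f (T \ S) (S \ T)
  have c3 := xpair_comm f (S ∩ T) (T \ S)
  linarith

lemma cut_identity2 :
    (∑ e ∈ cutEdges V S, f e) + ∑ e ∈ cutEdges V T, f e =
      (∑ e ∈ cutEdges V (S \ T), f e) + (∑ e ∈ cutEdges V (T \ S), f e)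
        + 2 * xpair f (S ∩ T) (S ∪ T)ᶜ := by
  have hS : S = (S \ T) ∪ (S ∩ T) := by ext u; simp; tauto
  have hSc : Sᶜ = (T \ S) ∪ (S ∪ T)ᶜ := by ext u; simp; tauto
  have hT : T = (S ∩ T) ∪ (T \ S) := by ext u; simp; tauto
  have hTc : Tᶜ = (S \ T) ∪ (S ∪ T)ᶜ := by ext u; simp; tauto
  have hAc : (S \ T)ᶜ = (S ∩ T) ∪ ((T \ S) ∪ (S ∪ T)ᶜ) := by ext u; simp; tauto
  have hCc : (T \ S)ᶜ = (S ∩ T) ∪ ((S \ T) ∪ (S ∪ T)ᶜ) := by ext u; simp; tauto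
  have d1 : Disjoint (S \ T) (S ∩ T) := by rw [Finset.disjoint_left]; intro a h1 h2; simp at h1 h2; tauto
  have d2 : Disjoint (T \ S) ((S ∪ T)ᶜ) := by rw [Finset.disjoint_left]; intro a h1 h2; simp at h1 h2; tauto
  have d3 : Disjoint (S ∩ T) (T \ S) := by rw [Finset.disjoint_left]; intro a h1 h2; simp at h1 h2; tauto
  have d4 : Disjoint (S \ T) ((S ∪ T)ᶜ) := by rw [Finset.disjoint_left]; intro a h1 h2; simp at h1 h2; tauto
  have d8 : Disjoint (S ∩ T) ((T \ S) ∪ (S ∪ T)ᶜ) := by rw [Finset.disjoint_left]; intro a h1 h2; simp at h1 h2; tauto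
  have d9 : Disjoint (S ∩ T) ((S \ T) ∪ (S ∪ T)ᶜ) := by rw [Finset.disjoint_left]; intro a h1 h2; simp at h1 h2; tauto
  have eS : ∑ e ∈ cutEdges V S, f e = xpair f (S \ T) (T \ S) + xpair f (S \ T) (S ∪ T)ᶜ
      + xpair f (S ∩ T) (T \ S) + xpair f (S ∩ T) (S ∪ T)ᶜ := by
    rw [cutSum_eq_xpair]; nth_rewrite 1 [hS]; nth_rewrite 1 [hSc]
    exact xpair_union_union f d1 d2
  have eT : ∑ e ∈ cutEdges V T, f e = xpair f (S ∩ T) (S \ T) + xpair f (S ∩ T) (S ∪ T)ᶜ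
      + xpair f (T \ S) (S \ T) + xpair f (T \ S) (S ∪ T)ᶜ := by
    rw [cutSum_eq_xpair]; nth_rewrite 1 [hT]; nth_rewrite 1 [hTc]
    exact xpair_union_union f d3 d4
  have eA : ∑ e ∈ cutEdges V (S \ T), f e = xpair f (S \ T) (S ∩ T)
      + xpair f (S \ T) (T \ S) + xpair f (S \ T) (S ∪ T)ᶜ := by
    rw [cutSum_eq_xpair]; nth_rewrite 1 [hAc]
    rw [xpair_union_right f _ d8, xpair_union_right f _ d2]; ring
  have eC : ∑ e ∈ cutEdges V (T \ S), f e = xpair f (T \ S) (S ∩ T)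
      + xpair f (T \ S) (S \ T) + xpair f (T \ S) (S ∪ T)ᶜ := by
    rw [cutSum_eq_xpair]; nth_rewrite 1 [hCc]
    rw [xpair_union_right f _ d9, xpair_union_right f _ d4]; ring
  have c1 := xpair_comm f (S ∩ T) (S \ T)
  have c2 := xpair_comm f (T \ S) (S \ T)
  have c3 := xpair_comm f (S ∩ T) (T \ S)
  linarith

lemma cut_insert {w : V} {S : Finset V} (hw : w ∉ S) (f : Finset V → ℝ) :
    ∑ e ∈ cutEdges V (insert w S), f e =
      (∑ e ∈ cutEdges V S, f e) + (∑ e ∈ cutEdges V {w}, f e) - 2 * xpair f S {w} := by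
  have hid := cut_identity1 f S {w}
  have h1 : S ∪ {w} = insert w S := by ext u; simp
  have h2 : S ∩ {w} = ∅ := by ext u; simp; rintro hu rfl; exact hw hu
  have h3 : S \ {w} = S := by ext u; simp; rintro hu rfl; exact hw hu
  have h4 : ({w} : Finset V) \ S = {w} := by ext u; simp; rintro rfl; exact hw
  rw [h1, h2, h3, h4] at hid
  rw [cutSum_empty] at hid
  linarith

end identities

section FourIneq
variable (a b c d : ℝ)

private lemma fi_a (hb : b ≤ a) (hc : c ≤ a) (hd : d ≤ a) :
    min (max a b) (max c d) + min (max b c) (max a d) ≤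
      max (min (max a (max b c)) d + min b (max a (max c d)))
          (min a (max b (max c d)) + min c (max a (max b d))) := by
  rw [min_eq_right (le_trans (max_le hc hd) (le_max_left a b)),
    min_eq_left (le_trans (max_le hb hc) (le_max_left a d)),
    min_eq_right (le_trans hd (le_max_left _ _)),
    min_eq_left (le_trans hb (le_max_left _ _)),
    min_eq_right (max_le hb (max_le hc hd)),
    min_eq_left (le_trans hc (le_max_left _ _))]
  rcases le_total b c with h | h
  · rcases le_total c d with h2 | h2
    · refine le_max_of_le_right ?_
      have e : max b (max c d) = d := by rw [max_eq_right h2, max_eq_right (le_trans h h2)]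
      rw [e, max_eq_right h2, max_eq_right h]
    · refine le_max_of_le_right ?_
      have e : max b (max c d) = c := by rw [max_eq_left h2, max_eq_right h]
      rw [e, max_eq_left h2, max_eq_right h]
  · rcases le_total c d with h2 | h2
    · refine le_max_of_le_left ?_
      rw [max_eq_right h2, max_eq_left h]
    · refine le_max_of_le_right ?_
      have e : max b (max c d) = b := by rw [max_eq_left h2, max_eq_left h]
      rw [e, max_eq_left h2, max_eq_left h]; linarith

private lemma fi_b (ha : a ≤ b) (hc : c ≤ b) (hd : d ≤ b) :
    min (max a b) (max c d) + min (max b c) (max a d) ≤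
      max (min (max a (max b c)) d + min b (max a (max c d)))
          (min a (max b (max c d)) + min c (max a (max b d))) := by
  rw [min_eq_right (le_trans (max_le hc hd) (le_max_right a b)),
    min_eq_right (le_trans (max_le ha hd) (le_max_left b c)),
    min_eq_right (le_trans hd (le_trans (le_max_left b c) (le_max_right a _))),
    min_eq_right (max_le ha (max_le hc hd)),
    min_eq_left (le_trans ha (le_max_left _ _)),
    min_eq_left (le_trans hc (le_trans (le_max_left b d) (le_max_right a _)))]
  rcases le_total a d with h | h
  · refine le_max_of_le_left ?_
    have := le_max_right a (max c d)
    rw [max_eq_right h]; linarith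
  · rcases le_total c d with h2 | h2
    · refine le_max_of_le_left ?_
      have := le_max_left a (max c d)
      rw [max_eq_right h2, max_eq_left h]
    · refine le_max_of_le_right ?_
      rw [max_eq_left h2, max_eq_left h]; linarith

private lemma fi_c (ha : a ≤ c) (hb : b ≤ c) (hd : d ≤ c) :
    min (max a b) (max c d) + min (max b c) (max a d) ≤
      max (min (max a (max b c)) d + min b (max a (max c d)))
          (min a (max b (max c d)) + min c (max a (max b d))) := by
  rw [min_eq_left (le_trans (max_le ha hb) (le_max_left c d)),
    min_eq_right (le_trans (max_le ha hd) (le_max_right b c)),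
    min_eq_right (le_trans hd (le_trans (le_max_right b c) (le_max_right a _))),
    min_eq_left (le_trans hb (le_trans (le_max_left c d) (le_max_right a _))),
    min_eq_left (le_trans ha (le_trans (le_max_left c d) (le_trans (le_max_right b _) le_rfl))),
    min_eq_right (max_le ha (max_le hb hd))]
  rcases le_total a b with h | h
  · rcases le_total a d with h2 | h2
    · refine le_max_of_le_left ?_
      rw [max_eq_right h, max_eq_right h2]; linarith
    · refine le_max_of_le_right ?_
      have := le_trans (le_max_left b d) (le_max_right a (max b d))
      rw [max_eq_right h, max_eq_left h2]; linarith
  · refine le_max_of_le_right ?_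
    have h3 : max a d ≤ max a (max b d) :=
      max_le (le_max_left _ _) (le_trans (le_max_right b d) (le_max_right a _))
    rw [max_eq_left h]; linarith

private lemma fi_d (ha : a ≤ d) (hb : b ≤ d) (hc : c ≤ d) :
    min (max a b) (max c d) + min (max b c) (max a d) ≤
      max (min (max a (max b c)) d + min b (max a (max c d)))
          (min a (max b (max c d)) + min c (max a (max b d))) := by
  rw [min_eq_left (le_trans (max_le ha hb) (le_max_right c d)),
    min_eq_left (le_trans (max_le hb hc) (le_max_right a d)),
    min_eq_left (max_le ha (max_le hb hc)),
    min_eq_left (le_trans hb (le_trans (le_max_right c d) (le_max_right a _))),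
    min_eq_left (le_trans ha (le_trans (le_max_right c d) (le_trans (le_max_right b _) le_rfl))),
    min_eq_left (le_trans hc (le_trans (le_max_right b d) (le_max_right a _)))]
  rcases le_total a b with h | h
  · refine le_max_of_le_left ?_
    have := le_max_right a (max b c)
    rw [max_eq_right h]; linarith
  · rcases le_total b c with h2 | h2
    · refine le_max_of_le_right ?_
      rw [max_eq_left h, max_eq_right h2]
    · refine le_max_of_le_left ?_
      rw [max_eq_left h, max_eq_left h2]; linarith [le_max_left a b]

lemma four_ineq :
    min (max a b) (max c d) + min (max b c) (max a d) ≤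
      max (min (max a (max b c)) d + min b (max a (max c d)))
          (min a (max b (max c d)) + min c (max a (max b d))) := by
  rcases le_total a b with h1 | h1
  · rcases le_total b c with h2 | h2
    · rcases le_total c d with h3 | h3
      · exact fi_d a b c d (le_trans h1 (le_trans h2 h3)) (le_trans h2 h3) h3
      · exact fi_c a b c d (le_trans h1 h2) h2 h3
    · rcases le_total b d with h3 | h3
      · exact fi_d a b c d (le_trans h1 h3) h3 (le_trans h2 h3)
      · exact fi_b a b c d h1 h2 h3
  · rcases le_total a c with h2 | h2
    · rcases le_total c d with h3 | h3
      · exact fi_d a b c d (le_trans h2 h3) (le_trans h1 (le_trans h2 h3)) h3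
      · exact fi_c a b c d h2 (le_trans h1 h2) h3
    · rcases le_total a d with h3 | h3
      · exact fi_d a b c d h3 (le_trans h1 h3) (le_trans h2 h3)
      · exact fi_a a b c d h1 h2 h3

end FourIneq

section Main
variable (r v : V) (ys : V → ℝ) (x : Finset V → ℝ)

/-- total cut weight of `S` -/
def cutS (x : Finset V → ℝ) (S : Finset V) : ℝ := ∑ e ∈ cutEdges V S, x e

noncomputable def Mbig : ℝ := 1 + ∑ u : V, ys u

noncomputable def Ynn : V → ℝ≥0 := fun u => Real.toNNReal (if u = r then Mbig ys else ys u)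

noncomputable def Gnn (S : Finset V) : ℝ≥0 := (S.erase v).sup (Ynn r ys)

def TightR (S : Finset V) : Prop :=
  cutS x S = 2 * ((min (Gnn r v ys S) (Gnn r v ys Sᶜ) : ℝ≥0) : ℝ)

variable {r v ys x}

lemma ys_le_M (hynn : ∀ u, 0 ≤ ys u) (u : V) : ys u ≤ Mbig ys := by
  have h := Finset.single_le_sum (f := ys) (fun i _ => hynn i) (Finset.mem_univ u)
  unfold Mbig; linarith

lemma M_nonneg (hynn : ∀ u, 0 ≤ ys u) : 0 ≤ Mbig ys := by
  unfold Mbig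
  have : (0:ℝ) ≤ ∑ u : V, ys u := Finset.sum_nonneg fun i _ => hynn i
  linarith

lemma Ynn_le_M (hynn : ∀ u, 0 ≤ ys u) (u : V) : Ynn r ys u ≤ Real.toNNReal (Mbig ys) := by
  unfold Ynn
  by_cases h : u = r
  · simp [h]
  · simp only [h, if_false]
    exact Real.toNNReal_mono (ys_le_M hynn u)

lemma Gnn_le_M (hynn : ∀ u, 0 ≤ ys u) (S : Finset V) :
    Gnn r v ys S ≤ Real.toNNReal (Mbig ys) :=
  Finset.sup_le fun u _ => Ynn_le_M hynn u

lemma le_Gnn {S : Finset V} {u : V} (hu : u ∈ S) (huv : u ≠ v) :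
    Ynn r ys u ≤ Gnn r v ys S :=
  Finset.le_sup (Finset.mem_erase.mpr ⟨huv, hu⟩)

lemma Ynn_coe (hynn : ∀ u, 0 ≤ ys u) {u : V} (hur : u ≠ r) :
    ((Ynn r ys u : ℝ≥0) : ℝ) = ys u := by
  unfold Ynn; simp only [hur, if_false]; exact Real.coe_toNNReal _ (hynn u)

lemma cutS_nonneg (hx0 : ∀ e ∈ completeEdges V, 0 ≤ x e) (S : Finset V) : 0 ≤ cutS x S :=
  Finset.sum_nonneg fun e he => hx0 e (cutEdges_subset S he)

/-- feasibility implies the symmetric-requirement bound -/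
lemma feas_R_half (hynn : ∀ u, 0 ≤ ys u) (hx0 : ∀ e ∈ completeEdges V, 0 ≤ x e)
    (hcut : ∀ S : Finset V, r ∉ S → ∀ u ∈ S, u ≠ v → 2 * ys u ≤ cutS x S)
    {S : Finset V} (hr : r ∉ S) : 2 * ((Gnn r v ys S : ℝ≥0) : ℝ) ≤ cutS x S := by
  rcases (S.erase v).eq_empty_or_nonempty with h | h
  · have : Gnn r v ys S = 0 := by unfold Gnn; rw [h]; simp
    rw [this]; simpa using cutS_nonneg hx0 S
  · obtain ⟨u, hu, hGu⟩ := Finset.exists_mem_eq_sup (S.erase v) h (Ynn r ys)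
    rw [Finset.mem_erase] at hu
    have hur : u ≠ r := fun h' => hr (h' ▸ hu.2)
    have : ((Gnn r v ys S : ℝ≥0) : ℝ) = ys u := by
      unfold Gnn; rw [hGu]; exact Ynn_coe hynn hur
    rw [this]
    exact hcut S hr u hu.2 hu.1

lemma feas_R (hynn : ∀ u, 0 ≤ ys u) (hx0 : ∀ e ∈ completeEdges V, 0 ≤ x e)
    (hcut : ∀ S : Finset V, r ∉ S → ∀ u ∈ S, u ≠ v → 2 * ys u ≤ cutS x S)
    (S : Finset V) :
    2 * ((min (Gnn r v ys S) (Gnn r v ys Sᶜ) : ℝ≥0) : ℝ) ≤ cutS x S := by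
  by_cases hr : r ∈ S
  · have hrc : r ∉ Sᶜ := by simp [hr]
    have h := feas_R_half hynn hx0 hcut hrc
    have hcc : cutS x Sᶜ = cutS x S := cutSum_compl x S
    have : ((min (Gnn r v ys S) (Gnn r v ys Sᶜ) : ℝ≥0) : ℝ) ≤ ((Gnn r v ys Sᶜ : ℝ≥0) : ℝ) :=
      NNReal.coe_le_coe.mpr (min_le_right _ _)
    linarith
  · have h := feas_R_half hynn hx0 hcut hr
    have : ((min (Gnn r v ys S) (Gnn r v ys Sᶜ) : ℝ≥0) : ℝ) ≤ ((Gnn r v ys S : ℝ≥0) : ℝ) :=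
      NNReal.coe_le_coe.mpr (min_le_left _ _)
    linarith

/-- a tight witness in original terms gives an `R`-tight set (after complementing if needed) -/
lemma tight_of_witness (hynn : ∀ u, 0 ≤ ys u) (hx0 : ∀ e ∈ completeEdges V, 0 ≤ x e)
    (hcut : ∀ S : Finset V, r ∉ S → ∀ u ∈ S, u ≠ v → 2 * ys u ≤ cutS x S)
    (hvr : v ≠ r) {S : Finset V} {u : V}
    (hr : r ∉ S) (hu : u ∈ S) (huv : u ≠ v) (heq : cutS x S = 2 * ys u) :
    TightR r v ys x S := by
  have h1 : 2 * ((min (Gnn r v ys S) (Gnn r v ys Sᶜ) : ℝ≥0) : ℝ) ≤ cutS x S :=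
    feas_R hynn hx0 hcut S
  have hur : u ≠ r := fun h' => hr (h' ▸ hu)
  have hyu : Real.toNNReal (ys u) ≤ Gnn r v ys S := by
    have := le_Gnn hu huv (r := r) (ys := ys)
    unfold Ynn at this; rwa [if_neg hur] at this
  have hyuc : Real.toNNReal (ys u) ≤ Gnn r v ys Sᶜ := by
    have hrc : r ∈ Sᶜ := by simp [hr]
    have h2 : Ynn r ys r ≤ Gnn r v ys Sᶜ := le_Gnn hrc (fun h' => hvr h'.symm)
    have h3 : Real.toNNReal (ys u) ≤ Ynn r ys r := by
      unfold Ynn; rw [if_pos rfl]; exact Real.toNNReal_mono (ys_le_M hynn u)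
    exact le_trans h3 h2
  have h4 : Real.toNNReal (ys u) ≤ min (Gnn r v ys S) (Gnn r v ys Sᶜ) := le_min hyu hyuc
  have h5 : ys u ≤ ((min (Gnn r v ys S) (Gnn r v ys Sᶜ) : ℝ≥0) : ℝ) := by
    have := NNReal.coe_le_coe.mpr h4
    rwa [Real.coe_toNNReal _ (hynn u)] at this
  unfold TightR
  linarith

lemma TightR_compl {S : Finset V} (h : TightR r v ys x S) : TightR r v ys x Sᶜ := by
  unfold TightR at *
  rw [compl_compl, min_comm]
  rw [show cutS x Sᶜ = cutS x S from cutSum_compl x S]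
  exact h

lemma Gnn_union (P Q : Finset V) :
    Gnn r v ys (P ∪ Q) = Gnn r v ys P ⊔ Gnn r v ys Q := by
  unfold Gnn; rw [Finset.erase_union_distrib, Finset.sup_union]

lemma Gnn_coe_union (P Q : Finset V) :
    ((Gnn r v ys (P ∪ Q) : ℝ≥0) : ℝ) = max ((Gnn r v ys P : ℝ≥0) : ℝ) ((Gnn r v ys Q : ℝ≥0) : ℝ) := by
  rw [Gnn_union, NNReal.coe_max]

/-- key uncrossing lemma: two `R`-tight sets avoiding `v` whose intersection contains a
fractional neighbour of `v` have tight union and intersection. -/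
lemma tight_merge (hynn : ∀ u, 0 ≤ ys u) (hx0 : ∀ e ∈ completeEdges V, 0 ≤ x e)
    (hcut : ∀ S : Finset V, r ∉ S → ∀ u ∈ S, u ≠ v → 2 * ys u ≤ cutS x S)
    {S T : Finset V} (hS : TightR r v ys x S) (hT : TightR r v ys x T)
    (hvS : v ∉ S) (hvT : v ∉ T) {a : V} (haS : a ∈ S) (haT : a ∈ T) (hxa : 0 < x {v, a}) :
    TightR r v ys x (S ∪ T) ∧ TightR r v ys x (S ∩ T) := by
  set A := S \ T with hA
  set B := S ∩ T with hB
  set C := T \ S with hC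
  set D := (S ∪ T)ᶜ with hD
  set al := ((Gnn r v ys A : ℝ≥0) : ℝ) with hal
  set be := ((Gnn r v ys B : ℝ≥0) : ℝ) with hbe
  set ga := ((Gnn r v ys C : ℝ≥0) : ℝ) with hga
  set de := ((Gnn r v ys D : ℝ≥0) : ℝ) with hde
  have eS : S = A ∪ B := by ext u; simp [hA, hB]; tauto
  have eSc : Sᶜ = C ∪ D := by ext u; simp [hC, hD]; tauto
  have eT : T = B ∪ C := by ext u; simp [hB, hC]; tauto
  have eTc : Tᶜ = A ∪ D := by ext u; simp [hA, hD]; tauto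
  have eU : S ∪ T = A ∪ (B ∪ C) := by ext u; simp [hA, hB, hC]; tauto
  have eUc : (S ∪ T)ᶜ = D := rfl
  have eI : S ∩ T = B := rfl
  have eIc : (S ∩ T)ᶜ = A ∪ (C ∪ D) := by ext u; simp [hA, hC, hD]; tauto
  have eAc : Aᶜ = B ∪ (C ∪ D) := by ext u; simp [hA, hB, hC, hD]; tauto
  have eCc : Cᶜ = A ∪ (B ∪ D) := by ext u; simp [hA, hB, hC, hD]; tauto
  have gS : ((Gnn r v ys S : ℝ≥0) : ℝ) = max al be := by rw [eS, Gnn_coe_union]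
  have gSc : ((Gnn r v ys Sᶜ : ℝ≥0) : ℝ) = max ga de := by rw [eSc, Gnn_coe_union]
  have gT : ((Gnn r v ys T : ℝ≥0) : ℝ) = max be ga := by rw [eT, Gnn_coe_union]
  have gTc : ((Gnn r v ys Tᶜ : ℝ≥0) : ℝ) = max al de := by rw [eTc, Gnn_coe_union]
  have gU : ((Gnn r v ys (S ∪ T) : ℝ≥0) : ℝ) = max al (max be ga) := by
    rw [eU, Gnn_coe_union, Gnn_coe_union]
  have gIc : ((Gnn r v ys (S ∩ T)ᶜ : ℝ≥0) : ℝ) = max al (max ga de) := by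
    rw [eIc, Gnn_coe_union, Gnn_coe_union]
  have gAc : ((Gnn r v ys Aᶜ : ℝ≥0) : ℝ) = max be (max ga de) := by
    rw [eAc, Gnn_coe_union, Gnn_coe_union]
  have gCc : ((Gnn r v ys Cᶜ : ℝ≥0) : ℝ) = max al (max be de) := by
    rw [eCc, Gnn_coe_union, Gnn_coe_union]
  have hS' : cutS x S = 2 * min (max al be) (max ga de) := by
    unfold TightR at hS; rw [hS, NNReal.coe_min, gS, gSc]
  have hT' : cutS x T = 2 * min (max be ga) (max al de) := by
    unfold TightR at hT; rw [hT, NNReal.coe_min, gT, gTc]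
  have fU : 2 * min (max al (max be ga)) de ≤ cutS x (S ∪ T) := by
    have h := feas_R hynn hx0 hcut (S ∪ T)
    rwa [NNReal.coe_min, gU, eUc] at h
  have fI : 2 * min be (max al (max ga de)) ≤ cutS x (S ∩ T) := by
    have h := feas_R hynn hx0 hcut (S ∩ T)
    rwa [NNReal.coe_min, eI, gIc] at h
  have fA : 2 * min al (max be (max ga de)) ≤ cutS x A := by
    have h := feas_R hynn hx0 hcut A
    rwa [NNReal.coe_min, gAc] at h
  have fC : 2 * min ga (max al (max be de)) ≤ cutS x C := by
    have h := feas_R hynn hx0 hcut C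
    rwa [NNReal.coe_min, gCc] at h
  have id1 : cutS x S + cutS x T = cutS x (S ∪ T) + cutS x (S ∩ T) + 2 * xpair x A C :=
    cut_identity1 x S T
  have id2 : cutS x S + cutS x T = cutS x A + cutS x C + 2 * xpair x B D :=
    cut_identity2 x S T
  have dAC : Disjoint A C := by
    rw [Finset.disjoint_left]; intro u h1 h2; simp [hA, hC] at h1 h2; tauto
  have dBD : Disjoint B D := by
    rw [Finset.disjoint_left]; intro u h1 h2; simp [hB, hD] at h1 h2; tauto
  have hAC : 0 ≤ xpair x A C := xpair_nonneg hx0 dAC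
  have haB : a ∈ B := by rw [hB]; exact Finset.mem_inter.mpr ⟨haS, haT⟩
  have hvD : v ∈ D := by rw [hD]; simp [hvS, hvT]
  have hBD : x {a, v} ≤ xpair x B D := single_le_xpair hx0 dBD haB hvD
  have hav : 0 < x {a, v} := by rwa [Finset.pair_comm]
  have key := four_ineq al be ga de
  rcases le_max_iff.mp key with hX | hY
  · -- submodular side: union and intersection both tight
    have e1 : cutS x (S ∪ T) = 2 * min (max al (max be ga)) de := by linarith
    have e2 : cutS x (S ∩ T) = 2 * min be (max al (max ga de)) := by linarith
    constructor
    · unfold TightR; rw [NNReal.coe_min, gU, eUc]; exact e1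
    · unfold TightR; rw [NNReal.coe_min, gIc]; exact e2
  · -- posimodular side: impossible
    exfalso
    linarith

variable (r v ys x)

/-- fractional neighbours of `v` -/
noncomputable def Nbr : Finset V := Finset.univ.filter (fun q => q ≠ v ∧ 0 < x {v, q})

def Blocked (a b : V) : Prop := ∃ S : Finset V, ∃ u : V, r ∉ S ∧ u ∈ S ∧ u ≠ v ∧
  ((v ∈ S ∧ a ∉ S ∧ b ∉ S) ∨ (v ∉ S ∧ a ∈ S ∧ b ∈ S)) ∧ cutS x S = 2 * ys u

def BlockedRR : Prop := ∃ S : Finset V, ∃ u : V,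
  v ∈ S ∧ r ∉ S ∧ u ∈ S ∧ u ≠ v ∧ cutS x S = 2 * ys u

variable {r v ys x}

lemma mem_Nbr {q : V} : q ∈ Nbr v x ↔ q ≠ v ∧ 0 < x {v, q} := by
  unfold Nbr; simp

lemma not_Nbr_zero (hx0 : ∀ e ∈ completeEdges V, 0 ≤ x e) {q : V} (hqv : q ≠ v)
    (hq : q ∉ Nbr v x) : x {v, q} = 0 := by
  rw [mem_Nbr] at hq
  push_neg at hq
  exact le_antisymm (hq hqv) (hx0 _ (pair_mem_completeEdges (Ne.symm hqv)))

lemma cutS_v_eq : cutS x {v} = ∑ q ∈ ({v} : Finset V)ᶜ, x {v, q} := by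
  unfold cutS
  rw [cutSum_eq_xpair]
  unfold xpair
  rw [Finset.sum_singleton]

/-- if all of `v`'s fractional mass goes into an `R`-tight set avoiding `v`, contradiction -/
lemma tight_superset_absurd (hynn : ∀ u, 0 ≤ ys u) (hvr : v ≠ r)
    (hx0 : ∀ e ∈ completeEdges V, 0 ≤ x e)
    (hcut : ∀ S : Finset V, r ∉ S → ∀ u ∈ S, u ≠ v → 2 * ys u ≤ cutS x S)
    {d : ℝ} (hdegv : cutS x {v} = 2 * d) (hd : 0 < d)
    {S : Finset V} (hSt : TightR r v ys x S) (hSv : v ∉ S) (hSN : Nbr v x ⊆ S) : False := by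
  have hNsub : Nbr v x ⊆ ({v} : Finset V)ᶜ := by
    intro q hq; rw [Finset.mem_compl, Finset.mem_singleton]; exact (mem_Nbr.mp hq).1
  have e1 : ∑ q ∈ ({v} : Finset V)ᶜ, x {v, q} = ∑ q ∈ Nbr v x, x {v, q} :=
    (Finset.sum_subset hNsub (fun q hq hq2 => not_Nbr_zero hx0
      (by rw [Finset.mem_compl, Finset.mem_singleton] at hq; exact hq) hq2)).symm
  have e2 : xpair x S {v} = ∑ p ∈ S, x {p, v} := by
    unfold xpair; exact Finset.sum_congr rfl fun p _ => Finset.sum_singleton _ _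
  have e3 : ∑ p ∈ S, x {p, v} = ∑ p ∈ Nbr v x, x {p, v} :=
    (Finset.sum_subset hSN (fun p hp hp2 => by
      rw [Finset.pair_comm]
      exact not_Nbr_zero hx0 (fun h => hSv (h ▸ hp)) hp2)).symm
  have e4 : ∑ p ∈ Nbr v x, x {p, v} = ∑ q ∈ Nbr v x, x {v, q} :=
    Finset.sum_congr rfl fun p _ => by rw [Finset.pair_comm]
  have hxpS : xpair x S {v} = 2 * d := by
    rw [e2, e3, e4, ← e1, ← cutS_v_eq, hdegv]
  have hins : cutS x (insert v S) = cutS x S + 2 * d - 2 * (2 * d) := by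
    have h := cut_insert hSv x
    have h' : cutS x (insert v S) = cutS x S + cutS x {v} - 2 * xpair x S {v} := h
    rw [h', hdegv, hxpS]
  have hG1 : Gnn r v ys (insert v S) = Gnn r v ys S := by
    unfold Gnn; rw [Finset.erase_insert hSv, Finset.erase_eq_of_notMem hSv]
  have hG2 : Gnn r v ys (insert v S)ᶜ = Gnn r v ys Sᶜ := by
    rw [Finset.compl_insert]; unfold Gnn; rw [Finset.erase_idem]
  have hfeas := feas_R hynn hx0 hcut (insert v S)
  rw [hG1, hG2] at hfeas
  unfold TightR at hSt
  linarith

/-- all pairs `(a1, b)` blocked is impossible when `d > 0`. -/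
lemma no_all_blocked (hynn : ∀ u, 0 ≤ ys u) (hvr : v ≠ r)
    (hx0 : ∀ e ∈ completeEdges V, 0 ≤ x e)
    (hcut : ∀ S : Finset V, r ∉ S → ∀ u ∈ S, u ≠ v → 2 * ys u ≤ cutS x S)
    {d : ℝ} (hdeg : ∀ u : V, u ≠ r → cutS x {u} = 2 * Function.update ys v d u) (hd : 0 < d)
    {a1 : V} (ha1 : a1 ∈ Nbr v x) (ha1r : a1 ≠ r)
    (hall : ∀ b ∈ Nbr v x, b ≠ a1 → Blocked r v ys x a1 b) : False := by
  obtain ⟨ha1v, ha1x⟩ := mem_Nbr.mp ha1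
  have hdegv : cutS x {v} = 2 * d := by
    have := hdeg v (by exact hvr)
    rwa [Function.update_self] at this
  by_cases hone : ∀ b ∈ Nbr v x, b = a1
  · -- single neighbour: direct contradiction
    have hNsub : Nbr v x ⊆ ({v} : Finset V)ᶜ := by
      intro q hq; rw [Finset.mem_compl, Finset.mem_singleton]; exact (mem_Nbr.mp hq).1
    have hsum : cutS x {v} = x {v, a1} := by
      rw [cutS_v_eq]
      refine Finset.sum_eq_single_of_mem a1 (by simp [ha1v]) (fun q hq hqa => ?_)
      refine not_Nbr_zero hx0 (by simpa using hq) (fun hmem => hqa (hone q hmem))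
    have hxa12 : x {v, a1} = 2 * d := by rw [← hsum, hdegv]
    have hva1 : v ∉ ({a1} : Finset V) := by simp [Ne.symm ha1v]
    have hins : cutS x (insert v {a1}) = cutS x {a1} + cutS x {v} - 2 * xpair x {a1} {v} :=
      cut_insert hva1 x
    have hxp : xpair x {a1} {v} = 2 * d := by
      unfold xpair
      rw [Finset.sum_singleton, Finset.sum_singleton, Finset.pair_comm, hxa12]
    have hdega1 : cutS x {a1} = 2 * ys a1 := by
      have := hdeg a1 ha1r
      rwa [Function.update_of_ne ha1v] at this
    have hrins : r ∉ insert v ({a1} : Finset V) := by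
      simp [Ne.symm hvr, Ne.symm ha1r]
    have hlow := hcut _ hrins a1 (by simp) ha1v
    rw [hins, hxp, hdega1, hdegv] at hlow
    linarith
  · push_neg at hone
    obtain ⟨b0, hb0N, hb0ne⟩ := hone
    have conv : ∀ b ∈ Nbr v x, b ≠ a1 →
        ∃ T, TightR r v ys x T ∧ v ∉ T ∧ a1 ∈ T ∧ b ∈ T := by
      intro b hb hbne
      obtain ⟨S, u, hrS, huS, huv, hsep, heq⟩ := hall b hb (by exact hbne)
      have ht : TightR r v ys x S := tight_of_witness hynn hx0 hcut hvr hrS huS huv heq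
      rcases hsep with ⟨hvS, haS, hbS⟩ | ⟨hvS, haS, hbS⟩
      · exact ⟨Sᶜ, TightR_compl ht, by simp [hvS], by simp [haS], by simp [hbS]⟩
      · exact ⟨S, ht, hvS, haS, hbS⟩
    have main : ∀ A : Finset V, A ⊆ Nbr v x →
        ∃ S, TightR r v ys x S ∧ v ∉ S ∧ a1 ∈ S ∧ A ⊆ S := by
      intro A
      induction A using Finset.induction_on with
      | empty =>
        intro _
        obtain ⟨T, h1, h2, h3, _⟩ := conv b0 hb0N (fun h => hb0ne h)
        exact ⟨T, h1, h2, h3, Finset.empty_subset _⟩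
      | insert _ _ hnm ih =>
        rename_i a A
        intro hsub
        have hA : A ⊆ Nbr v x := fun q hq => hsub (Finset.mem_insert_of_mem hq)
        obtain ⟨S, hSt, hSv, hSa1, hSA⟩ := ih hA
        by_cases haS : a ∈ S
        · exact ⟨S, hSt, hSv, hSa1, Finset.insert_subset haS hSA⟩
        · have haN : a ∈ Nbr v x := hsub (Finset.mem_insert_self _ _)
          have hane : a ≠ a1 := fun h => haS (h ▸ hSa1)
          obtain ⟨T, hTt, hTv, hTa1, hTa⟩ := conv a haN hane
          have hm := tight_merge hynn hx0 hcut hSt hTt hSv hTv hSa1 hTa1 ha1x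
          refine ⟨S ∪ T, hm.1, by simp [hSv, hTv], Finset.mem_union_left _ hSa1, ?_⟩
          refine Finset.insert_subset (Finset.mem_union_right _ hTa)
            (hSA.trans Finset.subset_union_left)
    obtain ⟨S, hSt, hSv, _, hSN⟩ := main (Nbr v x) (Finset.Subset.refl _)
    exact tight_superset_absurd hynn hvr hx0 hcut hdegv hd hSt hSv hSN

lemma no_blocked_rr (hynn : ∀ u, 0 ≤ ys u) (hvr : v ≠ r)
    (hx0 : ∀ e ∈ completeEdges V, 0 ≤ x e)
    (hcut : ∀ S : Finset V, r ∉ S → ∀ u ∈ S, u ≠ v → 2 * ys u ≤ cutS x S)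
    {d : ℝ} (hdegv : cutS x {v} = 2 * d) (hd : 0 < d)
    (hNr : ∀ q ∈ Nbr v x, q = r) (hb : BlockedRR r v ys x) : False := by
  obtain ⟨S, u, hvS, hrS, huS, huv, heq⟩ := hb
  have ht : TightR r v ys x S := tight_of_witness hynn hx0 hcut hvr hrS huS huv heq
  have htc : TightR r v ys x Sᶜ := TightR_compl ht
  refine tight_superset_absurd hynn hvr hx0 hcut hdegv hd htc (by simp [hvS]) ?_
  intro q hq
  rw [hNr q hq]
  simp [hrS]

variable (r v ys)

/-- the invariant carried through the splitting process -/
def Pinv (c xs x : Finset V → ℝ) (d : ℝ) : Prop :=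
  IsFeasibleLP r x (Function.update ys v d) ∧ (∀ e, e ∉ completeEdges V → x e = 0) ∧
  (∑ e ∈ completeEdges V, c e * x e ≤ ∑ e ∈ completeEdges V, c e * xs e)

noncomputable def Tset (x : Finset V → ℝ) : Finset (Finset V × V) :=
  (Finset.univ ×ˢ Finset.univ).filter
    (fun p => r ∉ p.1 ∧ p.2 ∈ p.1 ∧ p.2 ≠ v ∧ cutS x p.1 ≠ 2 * ys p.2)

noncomputable def meas (x : Finset V → ℝ) : ℕ := (Tset r v ys x).card + (Nbr v x).card

variable {r v ys}

lemma sum_update3 (w x : Finset V → ℝ) (ε : ℝ) (e1 e2 e3 : Finset V) (s : Finset (Finset V)) :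
    ∑ e ∈ s, w e * (x e + (if e = e1 then ε else 0) - (if e = e2 then ε else 0)
        - (if e = e3 then ε else 0))
      = (∑ e ∈ s, w e * x e) + (if e1 ∈ s then w e1 * ε else 0)
        - (if e2 ∈ s then w e2 * ε else 0) - (if e3 ∈ s then w e3 * ε else 0) := by
  simp only [mul_add, mul_sub, mul_ite, mul_zero]
  rw [Finset.sum_sub_distrib, Finset.sum_sub_distrib, Finset.sum_add_distrib,
    Finset.sum_ite_eq' s e1, Finset.sum_ite_eq' s e2, Finset.sum_ite_eq' s e3]

lemma sum_update3' (x : Finset V → ℝ) (ε : ℝ) (e1 e2 e3 : Finset V) (s : Finset (Finset V)) :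
    ∑ e ∈ s, (x e + (if e = e1 then ε else 0) - (if e = e2 then ε else 0)
        - (if e = e3 then ε else 0))
      = (∑ e ∈ s, x e) + (if e1 ∈ s then ε else 0)
        - (if e2 ∈ s then ε else 0) - (if e3 ∈ s then ε else 0) := by
  rw [Finset.sum_sub_distrib, Finset.sum_sub_distrib, Finset.sum_add_distrib,
    Finset.sum_ite_eq' s e1, Finset.sum_ite_eq' s e2, Finset.sum_ite_eq' s e3]

lemma sum_update1 (w x : Finset V → ℝ) (ε : ℝ) (e1 : Finset V) (s : Finset (Finset V)) :
    ∑ e ∈ s, w e * (x e - (if e = e1 then ε else 0))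
      = (∑ e ∈ s, w e * x e) - (if e1 ∈ s then w e1 * ε else 0) := by
  simp only [mul_sub, mul_ite, mul_zero]
  rw [Finset.sum_sub_distrib, Finset.sum_ite_eq' s e1]

lemma sum_update1' (x : Finset V → ℝ) (ε : ℝ) (e1 : Finset V) (s : Finset (Finset V)) :
    ∑ e ∈ s, (x e - (if e = e1 then ε else 0))
      = (∑ e ∈ s, x e) - (if e1 ∈ s then ε else 0) := by
  rw [Finset.sum_sub_distrib, Finset.sum_ite_eq' s e1]

lemma pair_sum_le_cutv (hx0 : ∀ e ∈ completeEdges V, 0 ≤ x e) {a b : V}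
    (ha : a ≠ v) (hb : b ≠ v) (hab : a ≠ b) : x {v, a} + x {v, b} ≤ cutS x {v} := by
  rw [cutS_v_eq]
  have hsub : ({a, b} : Finset V) ⊆ ({v} : Finset V)ᶜ := by
    intro q hq; simp at hq; rcases hq with rfl | rfl <;> simp [ha, hb]
  have h := Finset.sum_le_sum_of_subset_of_nonneg hsub (fun q hq hq2 => by
    rw [Finset.mem_compl, Finset.mem_singleton] at hq
    exact hx0 _ (pair_mem_completeEdges (Ne.symm hq)))
  rwa [Finset.sum_pair hab] at h

lemma single_le_cutv (hx0 : ∀ e ∈ completeEdges V, 0 ≤ x e) {a : V}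
    (ha : a ≠ v) : x {v, a} ≤ cutS x {v} := by
  rw [cutS_v_eq]
  refine Finset.single_le_sum (f := fun q => x {v, q}) (fun q hq => ?_)
    (Finset.mem_compl.mpr (fun hmem => ha (Finset.mem_singleton.mp hmem)))
  rw [Finset.mem_compl, Finset.mem_singleton] at hq
  exact hx0 _ (pair_mem_completeEdges (Ne.symm hq))

lemma split_step {c xs : Finset V → ℝ}
    (hynn : ∀ u, 0 ≤ ys u) (hvr : v ≠ r)
    (hc0 : ∀ e ∈ completeEdges V, 0 ≤ c e)
    (htri : ∀ p q w : V, p ≠ q → q ≠ w → p ≠ w → c {p, w} ≤ c {p, q} + c {q, w})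
    {x : Finset V → ℝ} {d : ℝ} (hP : Pinv r v ys c xs x d) (hd : 0 < d)
    {a b : V} (ha : a ∈ Nbr v x) (hb : b ∈ Nbr v x) (hab : a ≠ b)
    (hnb : ¬ Blocked r v ys x a b) :
    ∃ x' d', Pinv r v ys c xs x' d' ∧ meas r v ys x' < meas r v ys x := by
  obtain ⟨⟨hx0, hy0, hyr, hdeg, hroot, hcut0⟩, hsupp, hcost⟩ := hP
  obtain ⟨hav, hxa⟩ := mem_Nbr.mp ha
  obtain ⟨hbv, hxb⟩ := mem_Nbr.mp hb
  have hva : v ≠ a := Ne.symm hav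
  have hvb : v ≠ b := Ne.symm hbv
  have hcut : ∀ S : Finset V, r ∉ S → ∀ u ∈ S, u ≠ v → 2 * ys u ≤ cutS x S := by
    intro S hr u hu huv
    have h := hcut0 S hr u hu
    rwa [Function.update_of_ne huv] at h
  have hcutv : ∀ S : Finset V, r ∉ S → v ∈ S → 2 * d ≤ cutS x S := by
    intro S hr hvS
    have h := hcut0 S hr v hvS
    rwa [Function.update_self] at h
  have hdegv : cutS x {v} = 2 * d := by
    have h := hdeg v hvr; rwa [Function.update_self] at h
  -- the family of relevant separating constraints
  set F : Finset (Finset V × V) := (Finset.univ ×ˢ Finset.univ).filter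
    (fun p => r ∉ p.1 ∧ p.2 ∈ p.1 ∧ p.2 ≠ v ∧
      ((v ∈ p.1 ∧ a ∉ p.1 ∧ b ∉ p.1) ∨ (v ∉ p.1 ∧ a ∈ p.1 ∧ b ∈ p.1))) with hF_def
  have hmemF : ∀ p : Finset V × V, p ∈ F ↔ r ∉ p.1 ∧ p.2 ∈ p.1 ∧ p.2 ≠ v ∧
      ((v ∈ p.1 ∧ a ∉ p.1 ∧ b ∉ p.1) ∨ (v ∉ p.1 ∧ a ∈ p.1 ∧ b ∈ p.1)) := by
    intro p; rw [hF_def, Finset.mem_filter]; simp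
  have hFpos : ∀ p ∈ F, 0 < cutS x p.1 - 2 * ys p.2 := by
    intro p hp
    obtain ⟨h1, h2, h3, h4⟩ := (hmemF p).mp hp
    have hge := hcut p.1 h1 p.2 h2 h3
    have hne : cutS x p.1 ≠ 2 * ys p.2 := fun h => hnb ⟨p.1, p.2, h1, h2, h3, h4, h⟩
    rcases lt_or_eq_of_le hge with h | h
    · linarith
    · exact absurd h.symm hne
  set m : ℝ := min (x {v, a}) (x {v, b}) with hm_def
  have hm : 0 < m := lt_min hxa hxb
  set ε : ℝ := if hF : F.Nonempty then
      min m ((F.image (fun p => cutS x p.1 - 2 * ys p.2)).min' (hF.image _) / 2) else m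
    with hε_def
  have hε : 0 < ε := by
    rw [hε_def]
    split_ifs with hF
    · refine lt_min hm ?_
      have hmem := (F.image (fun p => cutS x p.1 - 2 * ys p.2)).min'_mem (hF.image _)
      rw [Finset.mem_image] at hmem
      obtain ⟨p, hp, hp2⟩ := hmem
      have := hFpos p hp
      linarith
    · exact hm
  have hεm : ε ≤ m := by
    rw [hε_def]; split_ifs with hF
    · exact min_le_left _ _
    · exact le_rfl
  have hεa : ε ≤ x {v, a} := le_trans hεm (min_le_left _ _)
  have hεb : ε ≤ x {v, b} := le_trans hεm (min_le_right _ _)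
  have hslack : ∀ p ∈ F, 2 * ε ≤ cutS x p.1 - 2 * ys p.2 := by
    intro p hp
    have hFne : F.Nonempty := ⟨p, hp⟩
    have hle := (F.image (fun p => cutS x p.1 - 2 * ys p.2)).min'_le _
      (Finset.mem_image_of_mem _ hp)
    rw [hε_def, dif_pos hFne]
    have := min_le_right m ((F.image (fun p => cutS x p.1 - 2 * ys p.2)).min' (hFne.image _) / 2)
    linarith
  have hεd : ε ≤ d := by
    have h := pair_sum_le_cutv hx0 hav hbv hab
    rw [hdegv] at h
    have h1 := min_le_left (x {v, a}) (x {v, b})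
    have h2 := min_le_right (x {v, a}) (x {v, b})
    rw [hm_def] at hεm
    linarith
  -- the new solution
  set x' : Finset V → ℝ := fun e => x e + (if e = ({a, b} : Finset V) then ε else 0)
    - (if e = ({v, a} : Finset V) then ε else 0) - (if e = ({v, b} : Finset V) then ε else 0)
    with hx'_def
  set d' : ℝ := d - ε with hd'_def
  have hne1 : ({a, b} : Finset V) ≠ {v, a} := by
    intro h
    have : v ∈ ({a, b} : Finset V) := h ▸ Finset.mem_insert_self v {a}
    simp at this
    rcases this with h' | h' <;> [exact hva h'; exact hvb h']
  have hne2 : ({a, b} : Finset V) ≠ {v, b} := by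
    intro h
    have : v ∈ ({a, b} : Finset V) := h ▸ Finset.mem_insert_self v {b}
    simp at this
    rcases this with h' | h' <;> [exact hva h'; exact hvb h']
  have hne3 : ({v, a} : Finset V) ≠ {v, b} := by
    intro h
    have : a ∈ ({v, b} : Finset V) := h ▸ (Finset.mem_insert_of_mem (Finset.mem_singleton_self a))
    simp at this
    rcases this with h' | h' <;> [exact hva h'.symm; exact hab h']
  have cutdelta : ∀ S : Finset V, cutS x' S = cutS x S
      + (if ({a, b} : Finset V) ∈ cutEdges V S then ε else 0)
      - (if ({v, a} : Finset V) ∈ cutEdges V S then ε else 0)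
      - (if ({v, b} : Finset V) ∈ cutEdges V S then ε else 0) := by
    intro S
    exact sum_update3' x ε {a, b} {v, a} {v, b} (cutEdges V S)
  have iv : ∀ (p q : V), p ≠ q → ∀ S : Finset V, ((p ∈ S) ↔ (q ∉ S)) →
      (if ({p, q} : Finset V) ∈ cutEdges V S then ε else 0) = ε := by
    intro p q hpq S h
    exact if_pos ((pair_mem_cutEdges_iff hpq).mpr h)
  have niv : ∀ (p q : V), p ≠ q → ∀ S : Finset V, ¬ ((p ∈ S) ↔ (q ∉ S)) →
      (if ({p, q} : Finset V) ∈ cutEdges V S then ε else 0) = 0 := by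
    intro p q hpq S h
    exact if_neg (fun hmem => h ((pair_mem_cutEdges_iff hpq).mp hmem))
  have cutsame : ∀ S : Finset V,
      ¬ ((v ∈ S ∧ a ∉ S ∧ b ∉ S) ∨ (v ∉ S ∧ a ∈ S ∧ b ∈ S)) → cutS x' S = cutS x S := by
    intro S hsep
    rw [cutdelta S]
    by_cases hvS : v ∈ S <;> by_cases haS : a ∈ S <;> by_cases hbS : b ∈ S <;>
      simp [pair_mem_cutEdges_iff hab, pair_mem_cutEdges_iff hva, pair_mem_cutEdges_iff hvb,
        hvS, haS, hbS] <;> tauto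
  have cutdrop : ∀ S : Finset V,
      ((v ∈ S ∧ a ∉ S ∧ b ∉ S) ∨ (v ∉ S ∧ a ∈ S ∧ b ∈ S)) → cutS x' S = cutS x S - 2 * ε := by
    intro S hsep
    rw [cutdelta S]
    rcases hsep with ⟨hvS, haS, hbS⟩ | ⟨hvS, haS, hbS⟩ <;>
      simp [pair_mem_cutEdges_iff hab, pair_mem_cutEdges_iff hva, pair_mem_cutEdges_iff hvb,
        hvS, haS, hbS] <;> ring
  have cutle : ∀ S : Finset V, cutS x' S ≤ cutS x S := by
    intro S
    by_cases hsep : (v ∈ S ∧ a ∉ S ∧ b ∉ S) ∨ (v ∉ S ∧ a ∈ S ∧ b ∈ S)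
    · rw [cutdrop S hsep]; linarith
    · rw [cutsame S hsep]
  -- feasibility of the new solution
  have hx'0 : ∀ e ∈ completeEdges V, 0 ≤ x' e := by
    intro e he
    rw [hx'_def]
    by_cases h1 : e = ({a, b} : Finset V)
    · simp [h1, hne1, hne1.symm, hne2, hne2.symm, hne3, hne3.symm]
      have := hx0 e he
      rw [h1] at this
      linarith
    · by_cases h2 : e = ({v, a} : Finset V)
      · simp [h1, h2, hne1, hne1.symm, hne2, hne2.symm, hne3, hne3.symm]
        have := hx0 e he
        rw [h2] at this
        linarith [hεa]
      · by_cases h3 : e = ({v, b} : Finset V)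
        · simp [h1, h2, h3, hne1, hne1.symm, hne2, hne2.symm, hne3, hne3.symm]
          have := hx0 e he
          rw [h3] at this
          linarith [hεb]
        · simp [h1, h2, h3]
          exact hx0 e he
  have hfeas' : IsFeasibleLP r x' (Function.update ys v d') := by
    refine ⟨hx'0, ?_, ?_, ?_, ?_, ?_⟩
    · intro u
      rcases eq_or_ne u v with rfl | huv
      · rw [Function.update_self]; linarith
      · rw [Function.update_of_ne huv]; exact hynn u
    · rw [Function.update_of_ne (Ne.symm hvr)]
      have h := hyr; rwa [Function.update_of_ne (Ne.symm hvr)] at h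
    · intro u hur
      have hdu := hdeg u hur
      have hdu' : cutS x {u} = 2 * Function.update ys v d u := hdu
      have hgoal : cutS x' {u} = 2 * Function.update ys v d' u := by
        rw [cutdelta {u}]
        rcases eq_or_ne u v with rfl | huv
        · rw [Function.update_self]
          rw [Function.update_self] at hdu'
          rw [niv a b hab {u} (by simp [hav, hbv]), iv u a hva {u} (by simp [hav]),
            iv u b hvb {u} (by simp [hbv]), hdu']
          ring
        · rw [Function.update_of_ne huv]
          rw [Function.update_of_ne huv] at hdu'
          by_cases hua : u = a
          · rw [iv a b hab {u} (by simp [hua, Ne.symm hab]), iv v a hva {u} (by simp [hua, hva]),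
              niv v b hvb {u} (by simp [hua, hva, Ne.symm hab]), hdu']
            ring
          · by_cases hub : u = b
            · rw [iv a b hab {u} (by simp [hub, hab]), niv v a hva {u} (by simp [hub, hvb, hab]),
                iv v b hvb {u} (by simp [hub, hvb]), hdu']
              ring
            · rw [niv a b hab {u} (by simp [Ne.symm hua, Ne.symm hub]),
                niv v a hva {u} (by simp [Ne.symm huv, Ne.symm hua]),
                niv v b hvb {u} (by simp [Ne.symm huv, Ne.symm hub]), hdu']
              ring
      exact hgoal
    · have hroot' : cutS x {r} ≤ 2 := hroot
      have hgoal : cutS x' {r} ≤ 2 := by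
        rw [cutdelta {r}]
        by_cases har : a = r
        · have hbr : b ≠ r := fun h => hab (har.trans h.symm)
          rw [iv a b hab {r} (by simp [har, hbr]), iv v a hva {r} (by simp [hvr, har]),
            niv v b hvb {r} (by simp [hvr, hbr])]
          linarith
        · by_cases hbr : b = r
          · rw [iv a b hab {r} (by simp [har, hbr]), niv v a hva {r} (by simp [hvr, har]),
              iv v b hvb {r} (by simp [hvr, hbr])]
            linarith
          · rw [niv a b hab {r} (by simp [har, hbr]), niv v a hva {r} (by simp [hvr, har]),
              niv v b hvb {r} (by simp [hvr, hbr])]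
            linarith
      exact hgoal
    · intro S hrS u huS
      have hgoal : 2 * Function.update ys v d' u ≤ cutS x' S := by
        by_cases hsep : (v ∈ S ∧ a ∉ S ∧ b ∉ S) ∨ (v ∉ S ∧ a ∈ S ∧ b ∈ S)
        · rw [cutdrop S hsep]
          rcases eq_or_ne u v with rfl | huv
          · rw [Function.update_self]
            have := hcutv S hrS huS
            rw [hd'_def]; linarith
          · rw [Function.update_of_ne huv]
            have hpF : (S, u) ∈ F := (hmemF (S, u)).mpr ⟨hrS, huS, huv, hsep⟩
            have := hslack (S, u) hpF
            simp only at this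
            linarith
        · rw [cutsame S hsep]
          rcases eq_or_ne u v with rfl | huv
          · rw [Function.update_self]
            have := hcutv S hrS huS
            rw [hd'_def]; linarith
          · rw [Function.update_of_ne huv]
            exact hcut S hrS u huS huv
      exact hgoal
  have hsupp' : ∀ e, e ∉ completeEdges V → x' e = 0 := by
    intro e he
    have h1 : e ≠ ({a, b} : Finset V) := fun h => he (h ▸ pair_mem_completeEdges hab)
    have h2 : e ≠ ({v, a} : Finset V) := fun h => he (h ▸ pair_mem_completeEdges hva)
    have h3 : e ≠ ({v, b} : Finset V) := fun h => he (h ▸ pair_mem_completeEdges hvb)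
    rw [hx'_def]
    simp [h1, h2, h3, hsupp e he]
  have hcost' : ∑ e ∈ completeEdges V, c e * x' e ≤ ∑ e ∈ completeEdges V, c e * xs e := by
    have h := sum_update3 c x ε {a, b} {v, a} {v, b} (completeEdges V)
    have h2 : ∑ e ∈ completeEdges V, c e * x' e = (∑ e ∈ completeEdges V, c e * x e)
        + c {a, b} * ε - c {v, a} * ε - c {v, b} * ε := by
      rw [hx'_def]
      rw [h, if_pos (pair_mem_completeEdges hab), if_pos (pair_mem_completeEdges hva),
        if_pos (pair_mem_completeEdges hvb)]
    have htr := htri a v b hav hvb hab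
    rw [Finset.pair_comm a v] at htr
    have h3 : c {a, b} * ε ≤ (c {v, a} + c {v, b}) * ε :=
      mul_le_mul_of_nonneg_right htr hε.le
    rw [h2]
    nlinarith [hcost]
  -- measure decrease
  have monoN : Nbr v x' ⊆ Nbr v x := by
    intro q hq
    obtain ⟨hqv, hqx⟩ := mem_Nbr.mp hq
    refine mem_Nbr.mpr ⟨hqv, ?_⟩
    have hne : ({v, q} : Finset V) ≠ {a, b} := by
      intro h
      have : v ∈ ({a, b} : Finset V) := h ▸ Finset.mem_insert_self v {q}
      simp at this
      rcases this with h' | h' <;> [exact hva h'; exact hvb h']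
    have : x' {v, q} ≤ x {v, q} := by
      simp only [hx'_def]
      rw [if_neg hne]
      split_ifs <;> linarith
    linarith
  have monoT : Tset r v ys x' ⊆ Tset r v ys x := by
    intro p hp
    unfold Tset at hp ⊢
    rw [Finset.mem_filter] at hp ⊢
    obtain ⟨hmem, h1, h2, h3, h4⟩ := hp
    refine ⟨hmem, h1, h2, h3, fun heq => h4 ?_⟩
    have hle1 := cutle p.1
    have hge : 2 * ys p.2 ≤ cutS x' p.1 := by
      have h := hfeas'.2.2.2.2.2 p.1 h1 p.2 h2
      rwa [Function.update_of_ne h3] at h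
    linarith
  have hattain : ((ε = x {v, a} ∨ ε = x {v, b})) ∨
      (∃ p ∈ F, cutS x p.1 - 2 * ys p.2 = 2 * ε) := by
    rw [hε_def]
    split_ifs with hF
    · set q := (F.image (fun p => cutS x p.1 - 2 * ys p.2)).min' (hF.image _) with hq_def
      rcases le_total m (q / 2) with h | h
      · rw [min_eq_left h]
        left
        rw [hm_def]
        rcases le_total (x {v, a}) (x {v, b}) with h' | h'
        · left; rw [min_eq_left h']
        · right; rw [min_eq_right h']
      · rw [min_eq_right h]
        right
        have hmem := (F.image (fun p => cutS x p.1 - 2 * ys p.2)).min'_mem (hF.image _)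
        rw [Finset.mem_image] at hmem
        obtain ⟨p, hp, hp2⟩ := hmem
        exact ⟨p, hp, by rw [hp2, ← hq_def]; ring⟩
    · left
      rw [hm_def]
      rcases le_total (x {v, a}) (x {v, b}) with h' | h'
      · left; rw [min_eq_left h']
      · right; rw [min_eq_right h']
  have hmeas : meas r v ys x' < meas r v ys x := by
    rcases hattain with hedge | ⟨p, hpF, hps⟩
    · -- an edge at v dies
      have hkill : (a ∈ Nbr v x ∧ a ∉ Nbr v x') ∨ (b ∈ Nbr v x ∧ b ∉ Nbr v x') := by
        rcases hedge with he | he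
        · left
          refine ⟨ha, fun hmem => ?_⟩
          have hx'a : x' {v, a} = 0 := by
            rw [hx'_def]
            simp [hne1.symm, hne3, ← he]
          have := (mem_Nbr.mp hmem).2
          rw [hx'a] at this
          exact lt_irrefl 0 this
        · right
          refine ⟨hb, fun hmem => ?_⟩
          have hx'b : x' {v, b} = 0 := by
            rw [hx'_def]
            simp [hne2.symm, hne3.symm, ← he]
          have := (mem_Nbr.mp hmem).2
          rw [hx'b] at this
          exact lt_irrefl 0 this
      have hNlt : (Nbr v x').card < (Nbr v x).card := by
        rcases hkill with ⟨h1, h2⟩ | ⟨h1, h2⟩ <;>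
          exact Finset.card_lt_card ((Finset.ssubset_iff_of_subset monoN).mpr ⟨_, h1, h2⟩)
      have hTle : (Tset r v ys x').card ≤ (Tset r v ys x).card := Finset.card_le_card monoT
      unfold meas; omega
    · -- a new tight constraint appears
      obtain ⟨h1, h2, h3, h4⟩ := (hmemF p).mp hpF
      have hpT : p ∈ Tset r v ys x := by
        unfold Tset
        rw [Finset.mem_filter]
        exact ⟨by simp, h1, h2, h3, by intro h; rw [h] at hps; linarith⟩
      have hpT' : p ∉ Tset r v ys x' := by
        unfold Tset
        rw [Finset.mem_filter]
        rintro ⟨-, -, -, -, h5⟩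
        apply h5
        rw [cutdrop p.1 h4]
        linarith
      have hTlt : (Tset r v ys x').card < (Tset r v ys x).card :=
        Finset.card_lt_card ((Finset.ssubset_iff_of_subset monoT).mpr ⟨p, hpT, hpT'⟩)
      have hNle : (Nbr v x').card ≤ (Nbr v x).card := Finset.card_le_card monoN
      unfold meas; omega
  exact ⟨x', d', ⟨hfeas', hsupp', hcost'⟩, hmeas⟩

lemma del_step {c xs : Finset V → ℝ}
    (hynn : ∀ u, 0 ≤ ys u) (hvr : v ≠ r)
    (hc0 : ∀ e ∈ completeEdges V, 0 ≤ c e)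
    {x : Finset V → ℝ} {d : ℝ} (hP : Pinv r v ys c xs x d) (hd : 0 < d)
    (hrN : r ∈ Nbr v x) (hnb : ¬ BlockedRR r v ys x) :
    ∃ x' d', Pinv r v ys c xs x' d' ∧ meas r v ys x' < meas r v ys x := by
  obtain ⟨⟨hx0, hy0, hyr, hdeg, hroot, hcut0⟩, hsupp, hcost⟩ := hP
  have hxr : 0 < x {v, r} := (mem_Nbr.mp hrN).2
  have hcut : ∀ S : Finset V, r ∉ S → ∀ u ∈ S, u ≠ v → 2 * ys u ≤ cutS x S := by
    intro S hr u hu huv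
    have h := hcut0 S hr u hu
    rwa [Function.update_of_ne huv] at h
  have hcutv : ∀ S : Finset V, r ∉ S → v ∈ S → 2 * d ≤ cutS x S := by
    intro S hr hvS
    have h := hcut0 S hr v hvS
    rwa [Function.update_self] at h
  have hdegv : cutS x {v} = 2 * d := by
    have h := hdeg v hvr; rwa [Function.update_self] at h
  set F : Finset (Finset V × V) := (Finset.univ ×ˢ Finset.univ).filter
    (fun p => v ∈ p.1 ∧ r ∉ p.1 ∧ p.2 ∈ p.1 ∧ p.2 ≠ v) with hF_def
  have hmemF : ∀ p : Finset V × V, p ∈ F ↔ v ∈ p.1 ∧ r ∉ p.1 ∧ p.2 ∈ p.1 ∧ p.2 ≠ v := by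
    intro p; rw [hF_def, Finset.mem_filter]; simp
  have hFpos : ∀ p ∈ F, 0 < cutS x p.1 - 2 * ys p.2 := by
    intro p hp
    obtain ⟨h1, h2, h3, h4⟩ := (hmemF p).mp hp
    have hge := hcut p.1 h2 p.2 h3 h4
    have hne : cutS x p.1 ≠ 2 * ys p.2 := fun h => hnb ⟨p.1, p.2, h1, h2, h3, h4, h⟩
    rcases lt_or_eq_of_le hge with h | h
    · linarith
    · exact absurd h.symm hne
  set ε : ℝ := if hF : F.Nonempty then
      min (x {v, r}) ((F.image (fun p => cutS x p.1 - 2 * ys p.2)).min' (hF.image _)) else x {v, r}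
    with hε_def
  have hε : 0 < ε := by
    rw [hε_def]
    split_ifs with hF
    · refine lt_min hxr ?_
      have hmem := (F.image (fun p => cutS x p.1 - 2 * ys p.2)).min'_mem (hF.image _)
      rw [Finset.mem_image] at hmem
      obtain ⟨p, hp, hp2⟩ := hmem
      have := hFpos p hp
      linarith
    · exact hxr
  have hεx : ε ≤ x {v, r} := by
    rw [hε_def]; split_ifs with hF
    · exact min_le_left _ _
    · exact le_rfl
  have hslack : ∀ p ∈ F, ε ≤ cutS x p.1 - 2 * ys p.2 := by
    intro p hp
    have hFne : F.Nonempty := ⟨p, hp⟩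
    have hle := (F.image (fun p => cutS x p.1 - 2 * ys p.2)).min'_le _
      (Finset.mem_image_of_mem _ hp)
    rw [hε_def, dif_pos hFne]
    exact le_trans (min_le_right _ _) hle
  have hεd : ε ≤ 2 * d := by
    have h := single_le_cutv hx0 (Ne.symm hvr)
    rw [hdegv] at h
    linarith
  set x' : Finset V → ℝ := fun e => x e - (if e = ({v, r} : Finset V) then ε else 0) with hx'_def
  set d' : ℝ := d - ε / 2 with hd'_def
  have cutdelta : ∀ S : Finset V, cutS x' S = cutS x S
      - (if ({v, r} : Finset V) ∈ cutEdges V S then ε else 0) := by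
    intro S
    exact sum_update1' x ε {v, r} (cutEdges V S)
  have iv : ∀ S : Finset V, ((v ∈ S) ↔ (r ∉ S)) →
      (if ({v, r} : Finset V) ∈ cutEdges V S then ε else 0) = ε := by
    intro S h
    exact if_pos ((pair_mem_cutEdges_iff hvr).mpr h)
  have niv : ∀ S : Finset V, ¬ ((v ∈ S) ↔ (r ∉ S)) →
      (if ({v, r} : Finset V) ∈ cutEdges V S then ε else 0) = 0 := by
    intro S h
    exact if_neg (fun hmem => h ((pair_mem_cutEdges_iff hvr).mp hmem))
  have cutle : ∀ S : Finset V, cutS x' S ≤ cutS x S := by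
    intro S
    rw [cutdelta S]
    split_ifs <;> linarith
  have hx'0 : ∀ e ∈ completeEdges V, 0 ≤ x' e := by
    intro e he
    simp only [hx'_def]
    split_ifs with h
    · rw [h] at he ⊢
      have := hx0 _ he
      linarith
    · simpa using hx0 e he
  have hfeas' : IsFeasibleLP r x' (Function.update ys v d') := by
    refine ⟨hx'0, ?_, ?_, ?_, ?_, ?_⟩
    · intro u
      rcases eq_or_ne u v with rfl | huv
      · rw [Function.update_self]; rw [hd'_def]; linarith
      · rw [Function.update_of_ne huv]; exact hynn u
    · rw [Function.update_of_ne (Ne.symm hvr)]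
      have h := hyr; rwa [Function.update_of_ne (Ne.symm hvr)] at h
    · intro u hur
      have hdu' : cutS x {u} = 2 * Function.update ys v d u := hdeg u hur
      have hgoal : cutS x' {u} = 2 * Function.update ys v d' u := by
        rw [cutdelta {u}]
        rcases eq_or_ne u v with rfl | huv
        · rw [Function.update_self]
          rw [Function.update_self] at hdu'
          rw [iv {u} (by simp [Ne.symm hvr]), hdu']
          rw [hd'_def]; ring
        · rw [Function.update_of_ne huv]
          rw [Function.update_of_ne huv] at hdu'
          rw [niv {u} (by simp [Ne.symm huv, Ne.symm hur]), hdu']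
          ring
      exact hgoal
    · have hroot' : cutS x {r} ≤ 2 := hroot
      have hgoal : cutS x' {r} ≤ 2 := by
        rw [cutdelta {r}]
        rw [iv {r} (by simp [hvr])]
        linarith
      exact hgoal
    · intro S hrS u huS
      have hgoal : 2 * Function.update ys v d' u ≤ cutS x' S := by
        rw [cutdelta S]
        by_cases hvS : v ∈ S
        · rw [iv S (by tauto)]
          rcases eq_or_ne u v with rfl | huv
          · rw [Function.update_self]
            have := hcutv S hrS huS
            rw [hd'_def]; linarith
          · rw [Function.update_of_ne huv]
            have hpF : (S, u) ∈ F := (hmemF (S, u)).mpr ⟨hvS, hrS, huS, huv⟩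
            have := hslack (S, u) hpF
            simp only at this
            linarith
        · rw [niv S (by tauto)]
          rcases eq_or_ne u v with rfl | huv
          · exact absurd huS hvS
          · rw [Function.update_of_ne huv]
            have := hcut S hrS u huS huv
            linarith
      exact hgoal
  have hsupp' : ∀ e, e ∉ completeEdges V → x' e = 0 := by
    intro e he
    have h1 : e ≠ ({v, r} : Finset V) := fun h => he (h ▸ pair_mem_completeEdges hvr)
    simp only [hx'_def]
    rw [if_neg h1]
    simp [hsupp e he]
  have hcost' : ∑ e ∈ completeEdges V, c e * x' e ≤ ∑ e ∈ completeEdges V, c e * xs e := by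
    have h := sum_update1 c x ε {v, r} (completeEdges V)
    have h2 : ∑ e ∈ completeEdges V, c e * x' e = (∑ e ∈ completeEdges V, c e * x e)
        - c {v, r} * ε := by
      simp only [hx'_def]
      rw [h, if_pos (pair_mem_completeEdges hvr)]
    rw [h2]
    have := hc0 _ (pair_mem_completeEdges hvr)
    nlinarith [hcost]
  have monoN : Nbr v x' ⊆ Nbr v x := by
    intro q hq
    obtain ⟨hqv, hqx⟩ := mem_Nbr.mp hq
    refine mem_Nbr.mpr ⟨hqv, ?_⟩
    have : x' {v, q} ≤ x {v, q} := by
      simp only [hx'_def]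
      split_ifs <;> linarith
    linarith
  have monoT : Tset r v ys x' ⊆ Tset r v ys x := by
    intro p hp
    unfold Tset at hp ⊢
    rw [Finset.mem_filter] at hp ⊢
    obtain ⟨hmem, h1, h2, h3, h4⟩ := hp
    refine ⟨hmem, h1, h2, h3, fun heq => h4 ?_⟩
    have hle1 := cutle p.1
    have hge : 2 * ys p.2 ≤ cutS x' p.1 := by
      have h := hfeas'.2.2.2.2.2 p.1 h1 p.2 h2
      rwa [Function.update_of_ne h3] at h
    linarith
  have hattain : ε = x {v, r} ∨ (∃ p ∈ F, cutS x p.1 - 2 * ys p.2 = ε) := by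
    rw [hε_def]
    split_ifs with hF
    · rcases le_total (x {v, r})
        ((F.image (fun p => cutS x p.1 - 2 * ys p.2)).min' (hF.image _)) with h | h
      · left; rw [min_eq_left h]
      · right
        have hmem := (F.image (fun p => cutS x p.1 - 2 * ys p.2)).min'_mem (hF.image _)
        rw [Finset.mem_image] at hmem
        obtain ⟨p, hp, hp2⟩ := hmem
        exact ⟨p, hp, by rw [hp2, min_eq_right h]⟩
    · left; rfl
  have hmeas : meas r v ys x' < meas r v ys x := by
    rcases hattain with hedge | ⟨p, hpF, hps⟩
    · have hkill : r ∈ Nbr v x ∧ r ∉ Nbr v x' := by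
        refine ⟨hrN, fun hmem => ?_⟩
        have hx'r : x' {v, r} = 0 := by
          have h0 : x' {v, r} = x {v, r} - ε := by simp [hx'_def]
          rw [h0, hedge]; ring
        have := (mem_Nbr.mp hmem).2
        rw [hx'r] at this
        exact lt_irrefl 0 this
      have hNlt : (Nbr v x').card < (Nbr v x).card :=
        Finset.card_lt_card ((Finset.ssubset_iff_of_subset monoN).mpr ⟨r, hkill.1, hkill.2⟩)
      have hTle : (Tset r v ys x').card ≤ (Tset r v ys x).card := Finset.card_le_card monoT
      unfold meas; omega
    · obtain ⟨h1, h2, h3, h4⟩ := (hmemF p).mp hpF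
      have hpT : p ∈ Tset r v ys x := by
        unfold Tset
        rw [Finset.mem_filter]
        exact ⟨by simp, h2, h3, h4, by intro h; rw [h] at hps; linarith⟩
      have hpT' : p ∉ Tset r v ys x' := by
        unfold Tset
        rw [Finset.mem_filter]
        rintro ⟨-, -, -, -, h5⟩
        apply h5
        rw [cutdelta p.1, iv p.1 (by tauto)]
        linarith
      have hTlt : (Tset r v ys x').card < (Tset r v ys x).card :=
        Finset.card_lt_card ((Finset.ssubset_iff_of_subset monoT).mpr ⟨p, hpT, hpT'⟩)
      have hNle : (Nbr v x').card ≤ (Nbr v x).card := Finset.card_le_card monoN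
      unfold meas; omega
  exact ⟨x', d', ⟨hfeas', hsupp', hcost'⟩, hmeas⟩

lemma descend {c xs : Finset V → ℝ}
    (hynn : ∀ u, 0 ≤ ys u) (hvr : v ≠ r)
    (hc0 : ∀ e ∈ completeEdges V, 0 ≤ c e)
    (htri : ∀ p q w : V, p ≠ q → q ≠ w → p ≠ w → c {p, w} ≤ c {p, q} + c {q, w})
    {x : Finset V → ℝ} {d : ℝ} (hP : Pinv r v ys c xs x d) (hd : 0 < d) :
    ∃ x' d', Pinv r v ys c xs x' d' ∧ meas r v ys x' < meas r v ys x := by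
  have hx0 := hP.1.1
  have hcut : ∀ S : Finset V, r ∉ S → ∀ u ∈ S, u ≠ v → 2 * ys u ≤ cutS x S := by
    intro S hr u hu huv
    have h := hP.1.2.2.2.2.2 S hr u hu
    rwa [Function.update_of_ne huv] at h
  have hdeg : ∀ u : V, u ≠ r → cutS x {u} = 2 * Function.update ys v d u := fun u hu =>
    hP.1.2.2.2.1 u hu
  have hdegv : cutS x {v} = 2 * d := by
    have h := hdeg v hvr; rwa [Function.update_self] at h
  have hNne : (Nbr v x).Nonempty := by
    rw [Finset.nonempty_iff_ne_empty]
    intro hemp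
    have hzero : cutS x {v} = 0 := by
      rw [cutS_v_eq]
      refine Finset.sum_eq_zero fun q hq => ?_
      rw [Finset.mem_compl, Finset.mem_singleton] at hq
      exact not_Nbr_zero hx0 hq (by rw [hemp]; exact Finset.notMem_empty q)
    rw [hdegv] at hzero
    linarith
  by_cases hex : ∃ a1 ∈ Nbr v x, a1 ≠ r
  · obtain ⟨a1, ha1N, ha1r⟩ := hex
    by_cases hallb : ∀ b ∈ Nbr v x, b ≠ a1 → Blocked r v ys x a1 b
    · exact absurd (no_all_blocked hynn hvr hx0 hcut hdeg hd ha1N ha1r hallb) (fun h => h)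
    · push_neg at hallb
      obtain ⟨b, hbN, hbne, hnb⟩ := hallb
      exact split_step hynn hvr hc0 htri hP hd ha1N hbN (Ne.symm hbne) hnb
  · push_neg at hex
    have hrN : r ∈ Nbr v x := by
      obtain ⟨q, hq⟩ := hNne
      have := hex q hq
      rwa [this] at hq
    by_cases hbrr : BlockedRR r v ys x
    · exact absurd (no_blocked_rr hynn hvr hx0 hcut hdegv hd hex hbrr) (fun h => h)
    · exact del_step hynn hvr hc0 hP hd hrN hbrr

lemma drive {c xs : Finset V → ℝ}
    (hynn : ∀ u, 0 ≤ ys u) (hvr : v ≠ r)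
    (hc0 : ∀ e ∈ completeEdges V, 0 ≤ c e)
    (htri : ∀ p q w : V, p ≠ q → q ≠ w → p ≠ w → c {p, w} ≤ c {p, q} + c {q, w}) :
    ∀ n : ℕ, ∀ x : Finset V → ℝ, ∀ d : ℝ, Pinv r v ys c xs x d → meas r v ys x < n →
      ∃ x', Pinv r v ys c xs x' 0 := by
  intro n
  induction n with
  | zero => intro x d _ h; exact absurd h (Nat.not_lt_zero _)
  | succ n ih =>
    intro x d hP hm
    have hd0 : 0 ≤ d := by
      have := hP.1.2.1 v
      rwa [Function.update_self] at this
    rcases eq_or_lt_of_le hd0 with heq | hlt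
    · exact ⟨x, heq ▸ hP⟩
    · obtain ⟨x', d', hP', hm'⟩ := descend hynn hvr hc0 htri hP hlt
      exact ih x' d' hP' (by omega)

end Main

end PCTSP


open PCTSP in
/-- splitting off: given a feasible LP solution and a non-root vertex `v`,
there is a feasible solution with `y v = 0`, unchanged `y` elsewhere, and no larger cost. -/
theorem complete_splitting (V : Type*) [Fintype V] [DecidableEq V]
    (hV : 2 ≤ Fintype.card V) (r : V)
    (c : Finset V → ℝ)
    (hc : ∀ e ∈ completeEdges V, 0 ≤ c e)
    (htri : ∀ u v w : V, u ≠ v → v ≠ w → u ≠ w → c {u, w} ≤ c {u, v} + c {v, w})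
    (xs : Finset V → ℝ) (ys : V → ℝ) (hxy : IsFeasibleLP r xs ys)
    (v : V) (hv : v ≠ r) :
    ∃ (x : Finset V → ℝ) (y : V → ℝ), IsFeasibleLP r x y ∧
      y v = 0 ∧ (∀ u : V, u ≠ v → y u = ys u) ∧
      ∑ e ∈ completeEdges V, c e * x e ≤ ∑ e ∈ completeEdges V, c e * xs e := by
  classical
  obtain ⟨hx0, hy0, hyr, hdeg, hroot, hcut⟩ := hxy
  set xs' : Finset V → ℝ := fun e => if e ∈ completeEdges V then xs e else 0 with hxs'_def
  have hagree : ∀ e ∈ completeEdges V, xs' e = xs e := fun e he => if_pos he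
  have hsum : ∀ s : Finset (Finset V), s ⊆ completeEdges V →
      ∑ e ∈ s, xs' e = ∑ e ∈ s, xs e :=
    fun s hs => Finset.sum_congr rfl (fun e he => hagree e (hs he))
  have hfeas0 : IsFeasibleLP r xs' (Function.update ys v (ys v)) := by
    rw [Function.update_eq_self]
    refine ⟨fun e he => by rw [hagree e he]; exact hx0 e he, hy0, hyr, ?_, ?_, ?_⟩
    · intro u hu
      rw [hsum _ (cutEdges_subset _)]
      exact hdeg u hu
    · rw [hsum _ (cutEdges_subset _)]
      exact hroot
    · intro S hr u hu
      rw [hsum _ (cutEdges_subset _)]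
      exact hcut S hr u hu
  have hP0 : Pinv r v ys c xs xs' (ys v) :=
    ⟨hfeas0, fun e he => if_neg he,
      le_of_eq (Finset.sum_congr rfl fun e he => by rw [hagree e he])⟩
  obtain ⟨x, hPx⟩ := drive (c := c) (xs := xs) hy0 hv hc htri
    (meas r v ys xs' + 1) xs' (ys v) hP0 (Nat.lt_succ_self _)
  refine ⟨x, Function.update ys v 0, hPx.1, by simp, fun u hu => Function.update_of_ne hu _ _,
    hPx.2.2⟩
end

section
/- Let V be a finite set, r ∈ V, δ ∈ [0,1), x : E → ℝ≥0 and y : V → ℝ such that x(δ(S)) ≥ 2 y_v for all S ⊆ V∖{r} and all v ∈ S. Let T be a tree in the complete graph on V containing r such that y_v ≥ δ for every v ∈ V[T], and let η : E[T] → [δ, 1] be such that for every edge e ∈ E[T], the connected component of T − e not containing r contains a vertex u with y_u ≥ η(e). Define z : E → ℝ by z := (1/(3−δ)) · x + Σ_{e ∈ E[T]} (1 − 2η(e)/(3−δ)) · χ^{e}, where χ^{e} is the 0/1 indicator vector of the single edge e. Then z(δ(S)) ≥ 1 for every nonempty S ⊆ V∖{r} with |δ_{E[T]}(S)| odd; consequently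 z lies in the dominant of the odd(T)-join polytope. -/
/-- The simple graph on `V` whose edges are the 2-element finsets in `F`. -/
def graphOf {V : Type*} [DecidableEq V] (F : Finset (Finset V)) : SimpleGraph V where
  Adj u v := u ≠ v ∧ ({u, v} : Finset V) ∈ F
  symm := ⟨fun u v h => ⟨h.1.symm, by rw [Finset.pair_comm]; exact h.2⟩⟩
  loopless := ⟨fun u h => h.1 rfl⟩

/-- A tree in the complete graph on `V`: a subgraph given by a vertex set and a set of
edges (2-element subsets with endpoints in the vertex set) that is connected and acyclic. -/
structure SubTree (V : Type*) [Fintype V] [DecidableEq V] where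
  verts : Finset V
  edges : Finset (Finset V)
  card_two : ∀ e ∈ edges, e.card = 2
  endpoints_mem : ∀ e ∈ edges, e ⊆ verts
  verts_nonempty : verts.Nonempty
  connected : ∀ u ∈ verts, ∀ v ∈ verts, (graphOf edges).Reachable u v
  acyclic : (graphOf edges).IsAcyclic

open SimpleGraph

lemma pair_inter_card_one {V : Type*} [DecidableEq V] {a b : V} (hab : a ≠ b) (S : Finset V) :
    (({a, b} : Finset V) ∩ S).card = 1 ↔ ¬ ((a ∈ S) ↔ (b ∈ S)) := by
  by_cases ha : a ∈ S <;> by_cases hb : b ∈ S <;>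
    simp [Finset.insert_inter_of_mem, Finset.insert_inter_of_notMem,
      Finset.singleton_inter_of_mem, Finset.singleton_inter_of_notMem, ha, hb,
      Finset.card_pair hab]

lemma pair_finset_eq_sym2 {V : Type*} [DecidableEq V] {a b c d : V}
    (h : ({c, d} : Finset V) = {a, b}) (hcd : c ≠ d) : s(c, d) = s(a, b) := by
  have hc : c ∈ ({a, b} : Finset V) := h ▸ Finset.mem_insert_self c {d}
  have hd : d ∈ ({a, b} : Finset V) := h ▸ (by simp : d ∈ ({c, d} : Finset V))
  simp only [Finset.mem_insert, Finset.mem_singleton] at hc hd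
  rcases hc with rfl | rfl <;> rcases hd with rfl | rfl <;>
    simp_all [Sym2.eq_iff]

lemma walk_cross_parity {V : Type*} [DecidableEq V] {G : SimpleGraph V} (S : Finset V) :
    ∀ {a b : V} (p : G.Walk a b),
      ((a ∈ S) ↔ (b ∈ S)) ↔
        Even (p.darts.countP (fun d => decide (¬ ((d.toProd.1 ∈ S) ↔ (d.toProd.2 ∈ S))))) := by
  intro a b p
  induction p with
  | nil => simp
  | @cons u v w h q ih =>
    by_cases huv : (u ∈ S) ↔ (v ∈ S) <;>
      simp only [Walk.darts_cons, List.countP_cons, decide_eq_true_eq, huv,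
        not_true, not_false_iff, decide_true, decide_false, if_true, if_false,
        Nat.add_zero, Nat.even_add_one] <;> tauto

lemma subtree_edge_mem_complete {V : Type*} [Fintype V] [DecidableEq V]
    (T : SubTree V) {e : Finset V} (he : e ∈ T.edges) : e ∈ completeEdges V := by
  simp only [completeEdges, Finset.mem_powersetCard]
  exact ⟨Finset.subset_univ _, T.card_two e he⟩

/-- the vector `z = x/(3-δ) + Σ_{e ∈ E[T]} (1 - 2η(e)/(3-δ))·χ^e` satisfies
`z(δ(S)) ≥ 1` for every nonempty `S ⊆ V \ {r}` crossed by an odd number of tree edges;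
consequently `z` lies in the dominant of the `odd(T)`-join polytope. -/
theorem parity_correction_vector (V : Type*) [Fintype V] [DecidableEq V]
    (r : V) (δ : ℝ) (hδ0 : 0 ≤ δ) (hδ1 : δ < 1)
    (x : Finset V → ℝ) (hx : ∀ e ∈ completeEdges V, 0 ≤ x e)
    (y : V → ℝ)
    (hcut : ∀ S : Finset V, r ∉ S → ∀ v ∈ S, 2 * y v ≤ ∑ e ∈ cutEdges V S, x e)
    (T : SubTree V) (hrT : r ∈ T.verts)
    (hyT : ∀ v ∈ T.verts, δ ≤ y v)
    (η : Finset V → ℝ)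
    (hη0 : ∀ e ∈ T.edges, δ ≤ η e) (hη1 : ∀ e ∈ T.edges, η e ≤ 1)
    (hcomp : ∀ e ∈ T.edges, ∃ u ∈ T.verts,
      ¬ (graphOf (T.edges.erase e)).Reachable r u ∧ η e ≤ y u) :
    ∀ S : Finset V, S.Nonempty → r ∉ S →
      Odd (T.edges.filter (fun e => (e ∩ S).card = 1)).card →
      1 ≤ ∑ e ∈ cutEdges V S,
        ((3 - δ)⁻¹ * x e + (if e ∈ T.edges then 1 - 2 * η e / (3 - δ) else 0)) := by
  intro S hSne hrS hodd
  have h3δ : (0:ℝ) < 3 - δ := by linarith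
  set F : Finset (Finset V) := T.edges.filter (fun e => (e ∩ S).card = 1) with hF
  set X : ℝ := ∑ e ∈ cutEdges V S, x e with hX
  -- split the sum
  have hfil : (cutEdges V S).filter (· ∈ T.edges) = F := by
    ext e
    simp only [cutEdges, Finset.mem_filter, hF]
    constructor
    · rintro ⟨⟨-, hc⟩, hT⟩; exact ⟨hT, hc⟩
    · rintro ⟨hT, hc⟩; exact ⟨⟨subtree_edge_mem_complete T hT, hc⟩, hT⟩
  have hsplit : ∑ e ∈ cutEdges V S,
      ((3 - δ)⁻¹ * x e + (if e ∈ T.edges then 1 - 2 * η e / (3 - δ) else 0))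
      = (3 - δ)⁻¹ * X + ∑ e ∈ F, (1 - 2 * η e / (3 - δ)) := by
    rw [Finset.sum_add_distrib, ← Finset.mul_sum, ← hX, ← hfil, Finset.sum_filter]
  rw [hsplit]
  by_cases hk : F.card = 1
  · -- exactly one crossing tree edge
    obtain ⟨e0, he0⟩ := Finset.card_eq_one.mp hk
    have he0F : e0 ∈ F := he0 ▸ Finset.mem_singleton_self e0
    have he0T : e0 ∈ T.edges := (Finset.mem_filter.mp he0F).1
    have he0S : (e0 ∩ S).card = 1 := (Finset.mem_filter.mp he0F).2
    obtain ⟨a, b, hab, he0ab⟩ := Finset.card_eq_two.mp (T.card_two e0 he0T)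
    obtain ⟨u, huT, hur, huη⟩ := hcomp e0 he0T
    obtain ⟨p⟩ := T.connected r hrT u huT
    set q : (graphOf T.edges).Walk r u := (p.toPath : (graphOf T.edges).Walk r u) with hq
    have hqpath : q.IsPath := p.toPath.2
    -- the path must use edge e0
    have hmem : s(a, b) ∈ q.edges := by
      by_contra hno
      refine hur ⟨q.transfer (graphOf (T.edges.erase e0)) ?_⟩
      intro e he
      have heG : e ∈ (graphOf T.edges).edgeSet := q.edges_subset_edgeSet he
      induction e using Sym2.ind with
      | _ c d =>
        obtain ⟨hcd, hmemT⟩ : c ≠ d ∧ ({c, d} : Finset V) ∈ T.edges := heG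
        refine (show c ≠ d ∧ ({c, d} : Finset V) ∈ T.edges.erase e0 from ⟨hcd, Finset.mem_erase.mpr ⟨?_, hmemT⟩⟩)
        intro hcd0
        exact hno (by rwa [← pair_finset_eq_sym2 (hcd0.trans he0ab) hcd])
    -- crossing darts are exactly darts with edge s(a,b)
    have hpred : ∀ d ∈ q.darts,
        (decide (¬ ((d.toProd.1 ∈ S) ↔ (d.toProd.2 ∈ S))) = true) ↔ d.edge = s(a, b) := by
      intro d hd
      have hadj : (graphOf T.edges).Adj d.toProd.1 d.toProd.2 := d.adj
      obtain ⟨hne, hmemT⟩ : d.toProd.1 ≠ d.toProd.2 ∧ ({d.toProd.1, d.toProd.2} : Finset V) ∈ T.edges := hadj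
      constructor
      · intro hcr
        simp only [decide_eq_true_eq] at hcr
        have : ({d.toProd.1, d.toProd.2} : Finset V) ∈ F :=
          Finset.mem_filter.mpr ⟨hmemT, (pair_inter_card_one hne S).mpr hcr⟩
        rw [he0] at this
        have := Finset.mem_singleton.mp this
        exact pair_finset_eq_sym2 (this.trans he0ab) hne
      · intro hed
        have : (d.toProd.1 = a ∧ d.toProd.2 = b) ∨ (d.toProd.1 = b ∧ d.toProd.2 = a) :=
          Sym2.eq_iff.mp hed
        have hcr : ¬ ((a ∈ S) ↔ (b ∈ S)) :=
          (pair_inter_card_one hab S).mp (by rwa [← he0ab])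
        simp only [decide_eq_true_eq]
        rcases this with ⟨h1, h2⟩ | ⟨h1, h2⟩ <;> rw [h1, h2] <;> tauto
    have hcount : q.darts.countP
        (fun d => decide (¬ ((d.toProd.1 ∈ S) ↔ (d.toProd.2 ∈ S)))) = 1 := by
      have h1 : q.darts.countP
          (fun d => decide (¬ ((d.toProd.1 ∈ S) ↔ (d.toProd.2 ∈ S))))
          = q.darts.countP (fun d => d.edge == s(a, b)) := by
        refine List.countP_congr ?_
        intro d hd
        simpa using hpred d hd
      rw [h1]
      have h2 : q.darts.countP (fun d => d.edge == s(a, b)) = q.edges.count s(a, b) := by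
        rw [List.count, Walk.edges, List.countP_map]
        rfl
      rw [h2]
      exact List.count_eq_one_of_mem hqpath.isTrail.edges_nodup hmem
    -- parity: u ∈ S
    have huS : u ∈ S := by
      have hpar := walk_cross_parity S q
      rw [hcount] at hpar
      by_contra huS
      exact Nat.not_even_one (hpar.mp (iff_of_false hrS huS))
    have hXu : 2 * y u ≤ X := hcut S hrS u huS
    have hηu : 2 * η e0 ≤ X := by nlinarith
    rw [he0, Finset.sum_singleton]
    have hinv : (0:ℝ) < (3 - δ)⁻¹ := inv_pos.mpr h3δ
    have : 2 * η e0 / (3 - δ) ≤ (3 - δ)⁻¹ * X := by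
      rw [div_eq_inv_mul]
      exact mul_le_mul_of_nonneg_left hηu hinv.le
    linarith
  · -- at least three crossing tree edges
    have hk3 : 3 ≤ F.card := by
      obtain ⟨m, hm⟩ := hodd
      omega
    have hFne : F.Nonempty := Finset.card_pos.mp (by omega)
    obtain ⟨e1, he1⟩ := hFne
    have he1T : e1 ∈ T.edges := (Finset.mem_filter.mp he1).1
    have he1S : (e1 ∩ S).card = 1 := (Finset.mem_filter.mp he1).2
    obtain ⟨v, hv⟩ := Finset.card_eq_one.mp he1S
    have hvm : v ∈ e1 ∩ S := hv ▸ Finset.mem_singleton_self v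
    have hvS : v ∈ S := (Finset.mem_inter.mp hvm).2
    have hvT : v ∈ T.verts := T.endpoints_mem e1 he1T (Finset.mem_inter.mp hvm).1
    have hXv : 2 * y v ≤ X := hcut S hrS v hvS
    have hXδ : 2 * δ ≤ X := le_trans (by nlinarith [hyT v hvT]) hXv
    have hterm : ∀ e ∈ F, (1 - δ) / (3 - δ) ≤ 1 - 2 * η e / (3 - δ) := by
      intro e he
      have heT : e ∈ T.edges := (Finset.mem_filter.mp he).1
      have h1 := hη1 e heT
      rw [div_le_iff₀ h3δ, sub_mul, div_mul_cancel₀ _ (ne_of_gt h3δ)]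
      ring_nf
      nlinarith
    have hsum : (F.card : ℝ) * ((1 - δ) / (3 - δ)) ≤ ∑ e ∈ F, (1 - 2 * η e / (3 - δ)) := by
      have := Finset.card_nsmul_le_sum F _ _ hterm
      rwa [nsmul_eq_mul] at this
    have hbnd : (0:ℝ) ≤ (1 - δ) / (3 - δ) := div_nonneg (by linarith) h3δ.le
    have hc3 : (3:ℝ) ≤ (F.card : ℝ) := by exact_mod_cast hk3
    have h3b : 3 * ((1 - δ) / (3 - δ)) ≤ ∑ e ∈ F, (1 - 2 * η e / (3 - δ)) :=
      le_trans (by nlinarith) hsum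
    have hXbd : (3 - δ)⁻¹ * (2 * δ) ≤ (3 - δ)⁻¹ * X :=
      mul_le_mul_of_nonneg_left hXδ (inv_pos.mpr h3δ).le
    have key : (3 - δ)⁻¹ * (2 * δ) + 3 * ((1 - δ) / (3 - δ)) = 1 := by
      field_simp
      ring
    linarith
end
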